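/- arXiv:1708.06499 — 7 statements merged into one kernel-verified Lean document; each statement's English description precedes it below -/
import Mathlib

section
/- For every (λ,μ)-smooth finite cost-minimization game with λ ≥ 0 and 0 ≤ μ < 1, every coarse correlated equilibrium σ of the game, and every strategy profile s*, the expected total cost satisfies E_{s∼σ}[C(s)] ≤ (λ/(1−μ))·C(s*). -/
/-- For every (λ,μ)-smooth finite cost-minimization game with λ ≥ 0 and
0 ≤ μ < 1, every coarse correlated equilibrium σ, and every strategy profile s*,
E_{s∼σ}[C(s)] ≤ (λ/(1−μ))·C(s*). -/
theorem smooth_game_poa_cce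
    (n : ℕ) (S : Fin n → Type) [∀ i, Fintype (S i)] [∀ i, Nonempty (S i)]
    (C : ∀ _ : Fin n, (∀ j, S j) → ℝ)
    (hC : ∀ i s, 0 ≤ C i s)
    (lam mu : ℝ) (hlam : 0 ≤ lam) (hmu0 : 0 ≤ mu) (hmu1 : mu < 1)
    (hsmooth : ∀ s sstar : ∀ j, S j,
      ∑ i, C i (Function.update s i (sstar i)) ≤
        lam * (∑ i, C i sstar) + mu * (∑ i, C i s))
    (σ : (∀ j, S j) → ℝ)
    (hσ0 : ∀ s, 0 ≤ σ s) (hσ1 : ∑ s, σ s = 1)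
    (hcce : ∀ (i : Fin n) (s' : S i),
      ∑ s, σ s * C i s ≤ ∑ s, σ s * C i (Function.update s i s'))
    (sstar : ∀ j, S j) :
    ∑ s, σ s * (∑ i, C i s) ≤ (lam / (1 - mu)) * (∑ i, C i sstar) := by
  set X := ∑ s, σ s * (∑ i, C i s) with hX
  have key : X ≤ lam * (∑ i, C i sstar) + mu * X := by
    calc X = ∑ i, ∑ s, σ s * C i s := by
            rw [hX, Finset.sum_comm]
            simp [Finset.mul_sum]
      _ ≤ ∑ i, ∑ s, σ s * C i (Function.update s i (sstar i)) :=
            Finset.sum_le_sum fun i _ => hcce i (sstar i)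
      _ = ∑ s, σ s * ∑ i, C i (Function.update s i (sstar i)) := by
            rw [Finset.sum_comm]
            simp [Finset.mul_sum]
      _ ≤ ∑ s, σ s * (lam * (∑ i, C i sstar) + mu * (∑ i, C i s)) := by
            apply Finset.sum_le_sum fun s _ =>
              mul_le_mul_of_nonneg_left (hsmooth s sstar) (hσ0 s)
      _ = lam * (∑ i, C i sstar) + mu * X := by
            have h : ∀ s, σ s * (lam * (∑ i, C i sstar) + mu * (∑ i, C i s)) =
                (lam * (∑ i, C i sstar)) * σ s + mu * (σ s * ∑ i, C i s) := fun s => by ring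
            rw [Finset.sum_congr rfl fun s _ => h s, Finset.sum_add_distrib,
              ← Finset.mul_sum, ← Finset.mul_sum, hσ1, hX]
            ring
  have h1 : 0 < 1 - mu := by linarith
  rw [div_mul_eq_mul_div, le_div_iff₀ h1]
  nlinarith [key]
end

section
/- For every (λ,μ)-smooth finite cost-minimization game with λ ≥ 0 and 0 ≤ μ < 1, every pure Nash equilibrium s of the game, and every strategy profile s*, the total cost satisfies C(s) ≤ (λ/(1−μ))·C(s*). -/
/-- For every (λ,μ)-smooth finite cost-minimization game with λ ≥ 0 and
0 ≤ μ < 1, every pure Nash equilibrium s, and every strategy profile s*,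
C(s) ≤ (λ/(1−μ))·C(s*). -/
theorem smooth_game_poa_pure
    (n : ℕ) (S : Fin n → Type) [∀ i, Fintype (S i)] [∀ i, Nonempty (S i)]
    (C : ∀ _ : Fin n, (∀ j, S j) → ℝ)
    (hC : ∀ i s, 0 ≤ C i s)
    (lam mu : ℝ) (hlam : 0 ≤ lam) (hmu0 : 0 ≤ mu) (hmu1 : mu < 1)
    (hsmooth : ∀ s sstar : ∀ j, S j,
      ∑ i, C i (Function.update s i (sstar i)) ≤
        lam * (∑ i, C i sstar) + mu * (∑ i, C i s))
    (s : ∀ j, S j)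
    (hne : ∀ (i : Fin n) (s' : S i), C i s ≤ C i (Function.update s i s'))
    (sstar : ∀ j, S j) :
    ∑ i, C i s ≤ (lam / (1 - mu)) * (∑ i, C i sstar) := by
  have h1 : ∑ i, C i s ≤ ∑ i, C i (Function.update s i (sstar i)) :=
    Finset.sum_le_sum fun i _ => hne i (sstar i)
  have h2 := hsmooth s sstar
  have h3 : (1 - mu) * (∑ i, C i s) ≤ lam * (∑ i, C i sstar) := by nlinarith
  have hpos : 0 < 1 - mu := by linarith
  rw [div_mul_eq_mul_div, le_div_iff₀ hpos, mul_comm]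
  exact h3
end

section
/- Let G be a weighted atomic congestion game in which every resource cost function ℓ_e is (λ,μ)-resource-smooth with λ ≥ 0 and 0 ≤ μ < 1, i.e., for every resource e and all nonnegative reals (a₁,…,aₙ) and (b₁,…,bₙ): Σᵢ bᵢ·ℓ_e(Σ_{j≠i} aⱼ + bᵢ) ≤ λ·(Σᵢ bᵢ)·ℓ_e(Σᵢ bᵢ) + μ·(Σᵢ aᵢ)·ℓ_e(Σᵢ aᵢ). Then for every coarse correlated equilibrium σ of G and every strategy profile s*, E_{s∼σ}[C(s)] ≤ (λ/(1−μ))·C(s*). -/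
open Finset

/-- The load induced on resource `e` by profile `s` in a weighted congestion game. -/
def atomicLoad {E : Type} [Fintype E] [DecidableEq E] {n : ℕ} (w : Fin n → ℝ)
    {S : Fin n → Finset (Finset E)} (s : ∀ i, {A : Finset E // A ∈ S i}) (e : E) : ℝ :=
  ∑ i, if e ∈ (s i).1 then w i else 0

/-- The cost of player `i` in profile `s`. -/
def atomicCost {E : Type} [Fintype E] [DecidableEq E] {n : ℕ} (w : Fin n → ℝ)
    (ℓ : E → ℝ → ℝ) {S : Fin n → Finset (Finset E)}
    (s : ∀ i, {A : Finset E // A ∈ S i}) (i : Fin n) : ℝ :=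
  ∑ e ∈ (s i).1, w i * ℓ e (atomicLoad w s e)

lemma total_eq {E : Type} [Fintype E] [DecidableEq E] {n : ℕ} (w : Fin n → ℝ)
    (ℓ : E → ℝ → ℝ) {S : Fin n → Finset (Finset E)}
    (s : ∀ i, {A : Finset E // A ∈ S i}) :
    ∑ i, atomicCost w ℓ s i = ∑ e, atomicLoad w s e * ℓ e (atomicLoad w s e) := by
  have h : ∀ i, atomicCost w ℓ s i =
      ∑ e, (if e ∈ (s i).1 then w i else 0) * ℓ e (atomicLoad w s e) := by
    intro i
    rw [atomicCost]
    rw [show (∑ e, (if e ∈ (s i).1 then w i else 0) * ℓ e (atomicLoad w s e)) =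
        ∑ e, (if e ∈ (s i).1 then w i * ℓ e (atomicLoad w s e) else 0) by
      apply Finset.sum_congr rfl; intro e _; split <;> simp]
    rw [Finset.sum_ite_mem, Finset.univ_inter]
  simp_rw [h]
  rw [Finset.sum_comm]
  apply Finset.sum_congr rfl
  intro e _
  rw [atomicLoad, Finset.sum_mul]

/-- In a weighted atomic congestion game whose cost functions are all
(λ,μ)-resource-smooth (λ ≥ 0, 0 ≤ μ < 1), every coarse correlated equilibrium σ and
every strategy profile s* satisfy E_{s∼σ}[C(s)] ≤ (λ/(1−μ))·C(s*). -/
theorem atomic_congestion_poa_cce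
    (E : Type) [Fintype E] [DecidableEq E]
    (n : ℕ) (w : Fin n → ℝ) (hw : ∀ i, 0 < w i)
    (S : Fin n → Finset (Finset E)) (hS : ∀ i, (S i).Nonempty)
    (ℓ : E → ℝ → ℝ) (hmono : ∀ e, Monotone (ℓ e)) (hℓ0 : ∀ e x, 0 ≤ x → 0 ≤ ℓ e x)
    (lam mu : ℝ) (hlam : 0 ≤ lam) (hmu0 : 0 ≤ mu) (hmu1 : mu < 1)
    (hsmooth : ∀ (e : E) (a b : Fin n → ℝ), (∀ i, 0 ≤ a i) → (∀ i, 0 ≤ b i) →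
      ∑ i, b i * ℓ e ((∑ j ∈ univ.erase i, a j) + b i) ≤
        lam * (∑ i, b i) * ℓ e (∑ i, b i) + mu * (∑ i, a i) * ℓ e (∑ i, a i))
    (σ : (∀ i, {A : Finset E // A ∈ S i}) → ℝ)
    (hσ0 : ∀ s, 0 ≤ σ s) (hσ1 : ∑ s, σ s = 1)
    (hcce : ∀ (i : Fin n) (s' : {A : Finset E // A ∈ S i}),
      ∑ s, σ s * atomicCost w ℓ s i ≤
        ∑ s, σ s * atomicCost w ℓ (Function.update s i s') i)
    (sstar : ∀ i, {A : Finset E // A ∈ S i}) :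
    ∑ s, σ s * (∑ i, atomicCost w ℓ s i) ≤
      (lam / (1 - mu)) * (∑ i, atomicCost w ℓ sstar i) := by
  set C : (∀ i, {A : Finset E // A ∈ S i}) → ℝ :=
    fun s => ∑ i, atomicCost w ℓ s i with hC
  -- Step 2: smoothness bound for every profile s
  have step2 : ∀ s, (∑ i, atomicCost w ℓ (Function.update s i (sstar i)) i) ≤
      lam * C sstar + mu * C s := by
    intro s
    set a : E → Fin n → ℝ := fun e j => if e ∈ (s j).1 then w j else 0 with ha
    set b : E → Fin n → ℝ := fun e j => if e ∈ (sstar j).1 then w j else 0 with hb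
    have key : (∑ i, atomicCost w ℓ (Function.update s i (sstar i)) i) =
        ∑ e, ∑ i, b e i * ℓ e ((∑ j ∈ univ.erase i, a e j) + b e i) := by
      rw [Finset.sum_comm]
      apply Finset.sum_congr rfl
      intro i _
      have hload : ∀ e, e ∈ (sstar i).1 →
          atomicLoad w (Function.update s i (sstar i)) e =
            (∑ j ∈ univ.erase i, a e j) + b e i := by
        intro e he
        rw [atomicLoad, ← Finset.sum_erase_add _ _ (Finset.mem_univ i)]
        congr 1
        · apply Finset.sum_congr rfl
          intro j hj
          rw [Function.update_of_ne (Finset.ne_of_mem_erase hj)]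
        · rw [Function.update_self]
      rw [atomicCost, Function.update_self]
      rw [show (∑ e, b e i * ℓ e ((∑ j ∈ univ.erase i, a e j) + b e i)) =
          ∑ e, (if e ∈ (sstar i).1 then
            w i * ℓ e (atomicLoad w (Function.update s i (sstar i)) e) else 0) by
        apply Finset.sum_congr rfl
        intro e _
        by_cases he : e ∈ (sstar i).1
        · have hbi : b e i = w i := by simp [hb, he]
          rw [if_pos he, hload e he, hbi]
        · simp [hb, he]]
      rw [Finset.sum_ite_mem, Finset.univ_inter]
    rw [key]
    have hsum : ∀ e, (∑ i, b e i * ℓ e ((∑ j ∈ univ.erase i, a e j) + b e i)) ≤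
        lam * atomicLoad w sstar e * ℓ e (atomicLoad w sstar e) +
          mu * atomicLoad w s e * ℓ e (atomicLoad w s e) := by
      intro e
      have h := hsmooth e (a e) (b e)
        (fun i => by show (0:ℝ) ≤ if e ∈ (s i).1 then w i else 0
                     split <;> [exact (hw i).le; rfl])
        (fun i => by show (0:ℝ) ≤ if e ∈ (sstar i).1 then w i else 0
                     split <;> [exact (hw i).le; rfl])
      have hae : ∑ i, a e i = atomicLoad w s e := rfl
      have hbe : ∑ i, b e i = atomicLoad w sstar e := rfl
      rw [hae, hbe] at h
      exact h
    calc (∑ e, ∑ i, b e i * ℓ e ((∑ j ∈ univ.erase i, a e j) + b e i))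
        ≤ ∑ e, (lam * atomicLoad w sstar e * ℓ e (atomicLoad w sstar e) +
            mu * atomicLoad w s e * ℓ e (atomicLoad w s e)) :=
          Finset.sum_le_sum fun e _ => hsum e
      _ = lam * C sstar + mu * C s := by
          rw [Finset.sum_add_distrib]
          simp only [hC]
          rw [total_eq w ℓ sstar, total_eq w ℓ s, Finset.mul_sum, Finset.mul_sum]
          congr 1 <;> (apply Finset.sum_congr rfl; intro e _; ring)
  -- Step 1: CCE bound
  have step1 : ∑ s, σ s * C s ≤
      ∑ s, σ s * ∑ i, atomicCost w ℓ (Function.update s i (sstar i)) i := by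
    calc ∑ s, σ s * C s = ∑ i, ∑ s, σ s * atomicCost w ℓ s i := by
          simp_rw [hC, Finset.mul_sum]; rw [Finset.sum_comm]
      _ ≤ ∑ i, ∑ s, σ s * atomicCost w ℓ (Function.update s i (sstar i)) i :=
          Finset.sum_le_sum fun i _ => hcce i (sstar i)
      _ = _ := by rw [Finset.sum_comm]; simp_rw [Finset.mul_sum]
  have step3 : ∑ s, σ s * C s ≤ lam * C sstar + mu * (∑ s, σ s * C s) := by
    calc ∑ s, σ s * C s
        ≤ ∑ s, σ s * ∑ i, atomicCost w ℓ (Function.update s i (sstar i)) i := step1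
      _ ≤ ∑ s, σ s * (lam * C sstar + mu * C s) :=
          Finset.sum_le_sum fun s _ => mul_le_mul_of_nonneg_left (step2 s) (hσ0 s)
      _ = lam * C sstar + mu * (∑ s, σ s * C s) := by
          simp_rw [mul_add, Finset.sum_add_distrib, Finset.mul_sum]
          rw [show (∑ s, σ s * (lam * C sstar)) = (∑ s, σ s) * (lam * C sstar) by
            rw [Finset.sum_mul], hσ1, one_mul]
          ring_nf
          congr 1
          apply Finset.sum_congr rfl
          intro s _
          ring
  rw [div_mul_eq_mul_div, le_div_iff₀ (by linarith)]
  nlinarith [step3]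
end

section
/- Let G be a discrete non-atomic congestion game with nondecreasing cost functions ℓ_e, and suppose ρ > 0 satisfies the Pigou-bound inequality: for every resource e and all reals u, v ≥ 0, u·ℓ_e(u) ≤ ρ·(v·ℓ_e(v) + (u−v)·ℓ_e(u)). Then for every pure equilibrium strategy distribution f and every feasible strategy distribution g of G, the social costs satisfy C(f) ≤ ρ·C(g). -/
open Finset

/-- The load induced on resource `e` by the strategy distribution `f` in a discrete
non-atomic congestion game with strategy sets `S`. -/
def naLoad {E : Type} [Fintype E] [DecidableEq E] {n : ℕ}
    (S : Fin n → Finset (Finset E)) (f : Fin n → Finset E → ℝ) (e : E) : ℝ :=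
  ∑ i, ∑ s ∈ (S i).filter (fun s => e ∈ s), f i s

/-- The cost of a strategy `s` under the strategy distribution `f`. -/
def naStratCost {E : Type} [Fintype E] [DecidableEq E] {n : ℕ}
    (S : Fin n → Finset (Finset E)) (ℓ : E → ℝ → ℝ)
    (f : Fin n → Finset E → ℝ) (s : Finset E) : ℝ :=
  ∑ e ∈ s, ℓ e (naLoad S f e)

/-- The social cost of the strategy distribution `f`. -/
def naSocialCost {E : Type} [Fintype E] [DecidableEq E] {n : ℕ}
    (S : Fin n → Finset (Finset E)) (ℓ : E → ℝ → ℝ)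
    (f : Fin n → Finset E → ℝ) : ℝ :=
  ∑ e, naLoad S f e * ℓ e (naLoad S f e)

/-- A feasible strategy distribution: nonnegative multiples of ε supported on the strategy
sets, with prescribed row sums. -/
def naFeasible {E : Type} [DecidableEq E] {n : ℕ} (ε : ℝ)
    (S : Fin n → Finset (Finset E)) (W : Fin n → ℝ)
    (f : Fin n → Finset E → ℝ) : Prop :=
  (∀ i s, 0 ≤ f i s) ∧ (∀ i s, ∃ k : ℕ, f i s = k * ε) ∧
    (∀ i s, s ∉ S i → f i s = 0) ∧ (∀ i, ∑ s ∈ S i, f i s = W i)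

lemma na_swap {E : Type} [Fintype E] [DecidableEq E] {n : ℕ}
    (S : Fin n → Finset (Finset E)) (f : Fin n → Finset E → ℝ) (c : E → ℝ) :
    ∑ e, naLoad S f e * c e = ∑ i, ∑ s ∈ S i, f i s * ∑ e ∈ s, c e := by
  unfold naLoad
  simp_rw [Finset.sum_mul, Finset.sum_filter, Finset.mul_sum]
  rw [Finset.sum_comm]
  refine Finset.sum_congr rfl fun i _ => ?_
  rw [Finset.sum_comm]
  refine Finset.sum_congr rfl fun s _ => ?_
  rw [← Finset.sum_filter]
  simp [Finset.filter_mem_eq_inter]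

lemma naLoad_nonneg {E : Type} [Fintype E] [DecidableEq E] {n : ℕ}
    (S : Fin n → Finset (Finset E)) (f : Fin n → Finset E → ℝ)
    (hf : ∀ i s, 0 ≤ f i s) (e : E) : 0 ≤ naLoad S f e :=
  Finset.sum_nonneg fun i _ => Finset.sum_nonneg fun s _ => hf i s

/-- If every cost function of a discrete non-atomic congestion game satisfies
the Pigou-bound inequality with constant ρ > 0, then for every pure equilibrium f and every
feasible strategy distribution g, C(f) ≤ ρ·C(g). -/
theorem nonatomic_congestion_poa
    (E : Type) [Fintype E] [DecidableEq E]
    (n : ℕ) (ε : ℝ) (hε : 0 < ε)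
    (m : Fin n → ℕ) (w : Fin n → ℝ) (hw : ∀ i, w i = m i * ε)
    (S : Fin n → Finset (Finset E)) (hS : ∀ i, (S i).Nonempty)
    (ℓ : E → ℝ → ℝ) (hmono : ∀ e, Monotone (ℓ e)) (hℓ0 : ∀ e x, 0 ≤ x → 0 ≤ ℓ e x)
    (ρ : ℝ) (hρ : 0 < ρ)
    (hpigou : ∀ (e : E) (u v : ℝ), 0 ≤ u → 0 ≤ v →
      u * ℓ e u ≤ ρ * (v * ℓ e v + (u - v) * ℓ e u))
    (f : Fin n → Finset E → ℝ) (hf : naFeasible ε S w f)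
    (heq : ∀ i : Fin n, ∀ s ∈ S i, ∀ s' ∈ S i, 0 < f i s →
      naStratCost S ℓ f s ≤ naStratCost S ℓ f s')
    (g : Fin n → Finset E → ℝ) (hg : naFeasible ε S w g) :
    naSocialCost S ℓ f ≤ ρ * naSocialCost S ℓ g := by
  obtain ⟨hf0, -, -, hfw⟩ := hf
  obtain ⟨hg0, -, -, hgw⟩ := hg
  set C : Finset E → ℝ := naStratCost S ℓ f with hC
  -- equilibrium implies ∑ f_s C_s ≤ ∑ g_s C_s
  have hsw := na_swap S f (fun e => ℓ e (naLoad S f e))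
  have hsw' := na_swap S g (fun e => ℓ e (naLoad S f e))
  have key : ∀ i, ∑ s ∈ S i, f i s * C s ≤ ∑ s ∈ S i, g i s * C s := by
    intro i
    obtain ⟨s0, hs0, hmin⟩ := (S i).exists_min_image C (hS i)
    have h1 : ∑ s ∈ S i, f i s * C s = C s0 * w i := by
      rw [← hfw i, Finset.mul_sum]
      refine Finset.sum_congr rfl fun s hs => ?_
      rcases eq_or_lt_of_le (hf0 i s) with h | h
      · rw [← h]; ring
      · have := heq i s hs s0 hs0 h
        have := hmin s hs
        rw [mul_comm]
        congr 1
        exact le_antisymm ‹C s ≤ C s0› ‹C s0 ≤ C s›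
    have h2 : C s0 * w i ≤ ∑ s ∈ S i, g i s * C s := by
      rw [← hgw i, Finset.mul_sum]
      refine Finset.sum_le_sum fun s hs => ?_
      rw [mul_comm]
      exact mul_le_mul_of_nonneg_left (hmin s hs) (hg0 i s)
    linarith
  have hfg : naSocialCost S ℓ f ≤ ∑ e, naLoad S g e * ℓ e (naLoad S f e) := by
    unfold naSocialCost
    rw [hsw, hsw']
    exact Finset.sum_le_sum fun i _ => key i
  have hpig : naSocialCost S ℓ f ≤ ρ * naSocialCost S ℓ g +
      ρ * (naSocialCost S ℓ f - ∑ e, naLoad S g e * ℓ e (naLoad S f e)) := by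
    unfold naSocialCost
    have := fun e : E => hpigou e (naLoad S f e) (naLoad S g e)
      (naLoad_nonneg S f hf0 e) (naLoad_nonneg S g hg0 e)
    calc ∑ e, naLoad S f e * ℓ e (naLoad S f e)
        ≤ ∑ e, ρ * (naLoad S g e * ℓ e (naLoad S g e) +
            (naLoad S f e - naLoad S g e) * ℓ e (naLoad S f e)) :=
          Finset.sum_le_sum fun e _ => this e
      _ = ρ * (∑ e, naLoad S g e * ℓ e (naLoad S g e)) +
          ρ * ((∑ e, naLoad S f e * ℓ e (naLoad S f e)) -
            ∑ e, naLoad S g e * ℓ e (naLoad S f e)) := by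
          simp only [Finset.mul_sum, mul_add, mul_sub, Finset.sum_add_distrib,
            Finset.sum_sub_distrib]
          congr 1
          rw [← Finset.sum_sub_distrib]
          exact Finset.sum_congr rfl fun e _ => by ring
  nlinarith [mul_le_mul_of_nonneg_left hfg hρ.le]
end

section
/- If a Bayesian auction is (λ,μ)-smooth with λ, μ ≥ 0 and the players' valuation distributions are independent, then every Bayes-Nash equilibrium σ has expected social welfare at least λ/(1+μ) times the optimal expected welfare: E_{v∼F} E_{a∼σ(v)}[SW(a; v)] ≥ (λ/(1+μ))·E_{v∼F}[OPT(v)]. -/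
/-!
A player of type `vᵢ` may deviate to the smoothness distribution `D*ᵢ(vᵢ, w₋ᵢ)` computed from a
fresh sample `w ∼ F`. By independence, the expected utility of this deviation equals that of
playing `D*ᵢ(v)` against opponents whose actions are drawn from the ex-ante action distribution
`piMixture F σ`, so summing the equilibrium conditions and applying smoothness to
`a ∼ piMixture F σ` gives `λ·E[OPT] − μ·E_v E_a[SW(a; v)] ≤ Σᵢ E[uᵢ] ≤ E[SW]`.
The deviation in which player `i` plays `σᵢ(wᵢ)` shows in the same way that the decoupled welfare
`E_v E_a[SW(a; v)]` is at most `E[SW]`, whence `(1 + μ)·E[SW] ≥ λ·E[OPT]`.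
-/

open Finset

section PiExpect

variable {ι : Type*} [DecidableEq ι] {T : ι → Type*}

lemma update_piSplitAt_symm (i : ι) (c c' : T i) (r : ∀ j : {j // j ≠ i}, T j) :
    Function.update ((Equiv.piSplitAt i T).symm (c', r)) i c =
      (Equiv.piSplitAt i T).symm (c, r) := by
  rw [Equiv.eq_symm_apply]
  ext j
  · simp
  · simp [Equiv.piSplitAt_symm_apply, j.2]

variable [Fintype ι] [∀ i, Fintype (T i)]

def piExpect (g : ∀ i, T i → ℝ) (f : (∀ i, T i) → ℝ) : ℝ :=
  ∑ t, (∏ i, g i (t i)) * f t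

variable {g : ∀ i, T i → ℝ}

lemma piExpect_congr {f f' : (∀ i, T i) → ℝ} (h : ∀ t, f t = f' t) :
    piExpect g f = piExpect g f' := by
  simp only [piExpect, h]

lemma piExpect_add (f f' : (∀ i, T i) → ℝ) :
    piExpect g (fun t => f t + f' t) = piExpect g f + piExpect g f' := by
  simp only [piExpect, mul_add, sum_add_distrib]

lemma piExpect_sub (f f' : (∀ i, T i) → ℝ) :
    piExpect g (fun t => f t - f' t) = piExpect g f - piExpect g f' := by
  simp only [piExpect, mul_sub, sum_sub_distrib]

lemma piExpect_const_mul (c : ℝ) (f : (∀ i, T i) → ℝ) :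
    piExpect g (fun t => c * f t) = c * piExpect g f := by
  simp only [piExpect, mul_sum]
  exact sum_congr rfl fun t _ => by ring

lemma piExpect_sum {κ : Type*} (s : Finset κ) (f : κ → (∀ i, T i) → ℝ) :
    piExpect g (fun t => ∑ k ∈ s, f k t) = ∑ k ∈ s, piExpect g (f k) := by
  simp only [piExpect, mul_sum]
  exact sum_comm

lemma sum_prod_eq_one (hg : ∀ i, ∑ x, g i x = 1) : ∑ t : ∀ i, T i, ∏ i, g i (t i) = 1 := by
  simp [← Fintype.prod_sum, hg]

lemma piExpect_const (hg : ∀ i, ∑ x, g i x = 1) (c : ℝ) : piExpect g (fun _ => c) = c := by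
  rw [piExpect, ← sum_mul, sum_prod_eq_one hg, one_mul]

lemma piExpect_mono (hg : ∀ i x, 0 ≤ g i x) {f f' : (∀ i, T i) → ℝ} (h : ∀ t, f t ≤ f' t) :
    piExpect g f ≤ piExpect g f' :=
  sum_le_sum fun t _ => mul_le_mul_of_nonneg_left (h t) (prod_nonneg fun i _ => hg i (t i))

lemma piExpect_nonneg (hg : ∀ i x, 0 ≤ g i x) {f : (∀ i, T i) → ℝ} (h : ∀ t, 0 ≤ f t) :
    0 ≤ piExpect g f :=
  sum_nonneg fun t _ => mul_nonneg (prod_nonneg fun i _ => hg i (t i)) (h t)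

lemma piExpect_eq_sum_piSplitAt (i : ι) (f : (∀ i, T i) → ℝ) :
    piExpect g f = ∑ c, g i c * ∑ r : ∀ j : {j // j ≠ i}, T j,
      (∏ j, g j.1 (r j)) * f ((Equiv.piSplitAt i T).symm (c, r)) := by
  rw [piExpect, ← (Equiv.piSplitAt i T).symm.sum_comp, Fintype.sum_prod_type]
  refine sum_congr rfl fun c _ => ?_
  rw [mul_sum]
  refine sum_congr rfl fun r _ => ?_
  rw [Fintype.prod_eq_mul_prod_subtype_ne _ i, mul_assoc]
  congr 2
  · simp [Equiv.piSplitAt_symm_apply]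
  · exact prod_congr rfl fun j _ => by simp [Equiv.piSplitAt_symm_apply, j.2]

lemma piExpect_update_eq_sum (i : ι) (hg : ∑ x, g i x = 1) (f : (∀ i, T i) → ℝ) (c : T i) :
    piExpect g (fun t => f (Function.update t i c)) = ∑ r : ∀ j : {j // j ≠ i}, T j,
      (∏ j, g j.1 (r j)) * f ((Equiv.piSplitAt i T).symm (c, r)) := by
  simp only [piExpect_eq_sum_piSplitAt i, update_piSplitAt_symm, ← sum_mul, hg, one_mul]

lemma piExpect_eq_sum_update (i : ι) (hg : ∑ x, g i x = 1) (f : (∀ i, T i) → ℝ) :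
    piExpect g f = ∑ c, g i c * piExpect g (fun t => f (Function.update t i c)) := by
  simp only [piExpect_eq_sum_piSplitAt i f, piExpect_update_eq_sum i hg]

lemma piExpect_update_congr (i : ι) {g' : ∀ i, T i → ℝ} (hg : ∑ x, g i x = 1)
    (hg' : ∑ x, g' i x = 1) (h : ∀ j ≠ i, g j = g' j) (f : (∀ i, T i) → ℝ) (c : T i) :
    piExpect g (fun t => f (Function.update t i c)) =
      piExpect g' (fun t => f (Function.update t i c)) := by
  rw [piExpect_update_eq_sum i hg, piExpect_update_eq_sum i hg']
  refine sum_congr rfl fun r _ => ?_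
  rw [prod_congr rfl fun (j : {j // j ≠ i}) _ => congrFun (h j.1 j.2) (r j)]

lemma piExpect_comp_apply (i : ι) (hg : ∀ i, ∑ x, g i x = 1) (φ : T i → ℝ) :
    piExpect g (fun t => φ (t i)) = ∑ c, g i c * φ c := by
  rw [piExpect_eq_sum_update i (hg i)]
  simp only [Function.update_self, piExpect_const hg]

end PiExpect

section Mixture

variable {ι : Type*} {V A : ι → Type*} [∀ i, Fintype (V i)]

def piMixture (F : ∀ i, V i → ℝ) (σ : ∀ i, V i → A i → ℝ) : ∀ i, A i → ℝ :=
  fun i a => ∑ c, F i c * σ i c a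

lemma piExpect_piExpect_eq_piMixture [Fintype ι] [DecidableEq ι] [∀ i, Fintype (A i)]
    (F : ∀ i, V i → ℝ) (σ : ∀ i, V i → A i → ℝ) (f : (∀ i, A i) → ℝ) :
    piExpect F (fun v => piExpect (fun i => σ i (v i)) f) = piExpect (piMixture F σ) f := by
  simp only [piExpect, piMixture, Fintype.prod_sum, mul_sum, sum_mul]
  rw [sum_comm]
  exact sum_congr rfl fun a _ => sum_congr rfl fun v _ => by rw [prod_mul_distrib, mul_assoc]

variable {F : ∀ i, V i → ℝ} {σ : ∀ i, V i → A i → ℝ}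

lemma piMixture_nonneg (hF : ∀ i x, 0 ≤ F i x) (hσ : ∀ i x a, 0 ≤ σ i x a) (i : ι) (a : A i) :
    0 ≤ piMixture F σ i a :=
  sum_nonneg fun c _ => mul_nonneg (hF i c) (hσ i c a)

lemma sum_piMixture [∀ i, Fintype (A i)] (hF : ∀ i, ∑ x, F i x = 1)
    (hσ : ∀ i x, ∑ a, σ i x a = 1) (i : ι) :
    ∑ a, piMixture F σ i a = 1 := by
  simp only [piMixture, sum_comm (γ := A i), ← mul_sum, hσ, mul_one, hF]

end Mixture

section BayesNash

variable {ι : Type*} [Fintype ι] [DecidableEq ι] {V A : ι → Type*}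
  [∀ i, Fintype (V i)] [∀ i, Fintype (A i)] {F : ∀ i, V i → ℝ} {σ : ∀ i, V i → A i → ℝ}

/-- The expected utility of player `i` of type `vi` playing `ai` when the others' types are drawn
from `F` and they play `σ`; by independence the others' actions are drawn from `piMixture F σ`. -/
def interimUtility (F : ∀ i, V i → ℝ) (σ : ∀ i, V i → A i → ℝ) (i : ι)
    (ui : (∀ j, A j) → V i → ℝ) (vi : V i) (ai : A i) : ℝ :=
  piExpect (piMixture F σ) fun a => ui (Function.update a i ai) vi

def IsBayesNash (F : ∀ i, V i → ℝ) (σ : ∀ i, V i → A i → ℝ)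
    (u : ∀ i, (∀ j, A j) → V i → ℝ) : Prop :=
  ∀ i vi ai,
    piExpect F (fun v => piExpect (fun j => σ j (Function.update v i vi j))
      fun a => u i (Function.update a i ai) vi) ≤
    piExpect F (fun v => piExpect (fun j => σ j (Function.update v i vi j)) fun a => u i a vi)

lemma piExpect_strategy_update_comp_update (hσ : ∀ i x, ∑ a, σ i x a = 1) (i : ι) (vi : V i)
    (ai : A i) (f : (∀ j, A j) → ℝ) :
    piExpect F (fun v => piExpect (fun j => σ j (Function.update v i vi j))
      fun a => f (Function.update a i ai)) =
    piExpect (piMixture F σ) fun a => f (Function.update a i ai) := by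
  rw [← piExpect_piExpect_eq_piMixture]
  refine piExpect_congr fun v => piExpect_update_congr i (by simpa using hσ i vi) (hσ i (v i))
    (fun j hj => by rw [Function.update_of_ne hj]) f ai

lemma piExpect_strategy_update (hσ : ∀ i x, ∑ a, σ i x a = 1) (i : ι) (vi : V i)
    (f : (∀ j, A j) → ℝ) :
    piExpect F (fun v => piExpect (fun j => σ j (Function.update v i vi j)) f) =
      ∑ ai, σ i vi ai * piExpect (piMixture F σ) fun a => f (Function.update a i ai) := by
  have hsplit : ∀ v : ∀ j, V j, piExpect (fun j => σ j (Function.update v i vi j)) f =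
      ∑ ai, σ i vi ai * piExpect (fun j => σ j (Function.update v i vi j))
        fun a => f (Function.update a i ai) := fun v => by
    simpa using piExpect_eq_sum_update (g := fun j => σ j (Function.update v i vi j)) i
      (by simpa using hσ i vi) f
  simp only [piExpect_congr hsplit, piExpect_sum, piExpect_const_mul,
    piExpect_strategy_update_comp_update hσ]

variable {u : ∀ i, (∀ j, A j) → V i → ℝ}

lemma IsBayesNash.interimUtility_le (hσ : ∀ i x, ∑ a, σ i x a = 1) (hN : IsBayesNash F σ u)
    (i : ι) (vi : V i) (ai : A i) :
    interimUtility F σ i (u i) vi ai ≤ ∑ b, σ i vi b * interimUtility F σ i (u i) vi b := by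
  calc _ = _ := (piExpect_strategy_update_comp_update hσ i vi ai fun a => u i a vi).symm
    _ ≤ _ := hN i vi ai
    _ = _ := piExpect_strategy_update hσ i vi _

lemma piExpect_utility_eq (hF : ∀ i, ∑ x, F i x = 1) (hσ : ∀ i x, ∑ a, σ i x a = 1) (i : ι) :
    piExpect F (fun v => piExpect (fun j => σ j (v j)) fun a => u i a (v i)) =
      ∑ c, F i c * ∑ b, σ i c b * interimUtility F σ i (u i) c b := by
  rw [piExpect_eq_sum_update i (hF i)]
  simp only [Function.update_self, piExpect_strategy_update hσ]
  rfl

lemma IsBayesNash.piExpect_deviation_le (hF0 : ∀ i x, 0 ≤ F i x) (hF : ∀ i, ∑ x, F i x = 1)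
    (hσ : ∀ i x, ∑ a, σ i x a = 1) (hN : IsBayesNash F σ u) (i : ι)
    (d : (∀ j, V j) → A i → ℝ) (hd0 : ∀ v b, 0 ≤ d v b) (hd : ∀ v, ∑ b, d v b = 1) :
    piExpect F (fun v => ∑ b, d v b * interimUtility F σ i (u i) (v i) b) ≤
      piExpect F (fun v => piExpect (fun j => σ j (v j)) fun a => u i a (v i)) := by
  set W : V i → ℝ := fun c => ∑ b, σ i c b * interimUtility F σ i (u i) c b
  have hpoint : ∀ v : ∀ j, V j, ∑ b, d v b * interimUtility F σ i (u i) (v i) b ≤ W (v i) :=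
    fun v => calc
      _ ≤ ∑ b, d v b * W (v i) := sum_le_sum fun b _ =>
          mul_le_mul_of_nonneg_left (hN.interimUtility_le hσ i (v i) b) (hd0 v b)
      _ = W (v i) := by rw [← sum_mul, hd v, one_mul]
  calc _ ≤ piExpect F (fun v => W (v i)) := piExpect_mono hF0 hpoint
    _ = _ := by rw [piExpect_comp_apply i hF, piExpect_utility_eq hF hσ]

end BayesNash

section Auction

variable {ι : Type*} [Fintype ι] [DecidableEq ι] {V A : ι → Type*} [∀ i, Fintype (A i)]
  {u : ∀ i, (∀ j, A j) → V i → ℝ} {p : ι → (∀ j, A j) → ℝ} {SW : (∀ j, A j) → (∀ j, V j) → ℝ}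

lemma piExpect_welfare (hSW : ∀ a v, SW a v = ∑ i, u i a (v i) + ∑ i, p i a)
    (g : ∀ i, A i → ℝ) (v : ∀ j, V j) :
    piExpect g (fun a => SW a v) =
      ∑ i, piExpect g (fun a => u i a (v i)) + piExpect g fun a => ∑ i, p i a := by
  rw [piExpect_congr (hSW · v), piExpect_add, piExpect_sum]

variable [∀ i, Fintype (V i)] {F : ∀ i, V i → ℝ} {σ : ∀ i, V i → A i → ℝ}

lemma sum_piExpect_utility_le_welfare (hF0 : ∀ i x, 0 ≤ F i x) (hσ0 : ∀ i x a, 0 ≤ σ i x a)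
    (hp : ∀ i a, 0 ≤ p i a) (hSW : ∀ a v, SW a v = ∑ i, u i a (v i) + ∑ i, p i a) :
    ∑ i, piExpect F (fun v => piExpect (fun j => σ j (v j)) fun a => u i a (v i)) ≤
      piExpect F fun v => piExpect (fun j => σ j (v j)) fun a => SW a v := by
  simp only [piExpect_welfare hSW, piExpect_add, piExpect_sum]
  exact le_add_of_nonneg_right <| sum_nonneg fun i _ =>
    piExpect_nonneg hF0 fun v => piExpect_nonneg (fun j => hσ0 j (v j)) (hp i)

lemma IsBayesNash.piExpect_piMixture_utility_le (hF0 : ∀ i x, 0 ≤ F i x)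
    (hF : ∀ i, ∑ x, F i x = 1) (hσ0 : ∀ i x a, 0 ≤ σ i x a) (hσ : ∀ i x, ∑ a, σ i x a = 1)
    (hN : IsBayesNash F σ u) (i : ι) :
    piExpect F (fun v => piExpect (piMixture F σ) fun a => u i a (v i)) ≤
      piExpect F (fun v => piExpect (fun j => σ j (v j)) fun a => u i a (v i)) := by
  rw [piExpect_congr fun v => piExpect_eq_sum_update i (sum_piMixture hF hσ i) _]
  exact hN.piExpect_deviation_le hF0 hF hσ i (fun _ => piMixture F σ i)
    (fun _ => piMixture_nonneg hF0 hσ0 i) (fun _ => sum_piMixture hF hσ i)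

lemma IsBayesNash.piExpect_piMixture_welfare_le (hF0 : ∀ i x, 0 ≤ F i x)
    (hF : ∀ i, ∑ x, F i x = 1) (hσ0 : ∀ i x a, 0 ≤ σ i x a) (hσ : ∀ i x, ∑ a, σ i x a = 1)
    (hN : IsBayesNash F σ u) (hSW : ∀ a v, SW a v = ∑ i, u i a (v i) + ∑ i, p i a) :
    piExpect F (fun v => piExpect (piMixture F σ) fun a => SW a v) ≤
      piExpect F fun v => piExpect (fun j => σ j (v j)) fun a => SW a v := by
  simp only [piExpect_welfare hSW, piExpect_add, piExpect_sum, piExpect_const hF,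
    piExpect_piExpect_eq_piMixture]
  gcongr with i
  exact hN.piExpect_piMixture_utility_le hF0 hF hσ0 hσ i

lemma IsBayesNash.smooth_deviation_bound (hF0 : ∀ i x, 0 ≤ F i x)
    (hF : ∀ i, ∑ x, F i x = 1) (hσ0 : ∀ i x a, 0 ≤ σ i x a) (hσ : ∀ i x, ∑ a, σ i x a = 1)
    (hN : IsBayesNash F σ u) (lam mu : ℝ) (OPT : (∀ j, V j) → ℝ)
    (D : (∀ j, V j) → ∀ i, A i → ℝ) (hD0 : ∀ v i a, 0 ≤ D v i a) (hD1 : ∀ v i, ∑ a, D v i a = 1)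
    (hD : ∀ v a, lam * OPT v - mu * SW a v ≤
      ∑ i, ∑ b, D v i b * u i (Function.update a i b) (v i)) :
    lam * piExpect F OPT - mu * piExpect F (fun v => piExpect (piMixture F σ) fun a => SW a v) ≤
      ∑ i, piExpect F (fun v => piExpect (fun j => σ j (v j)) fun a => u i a (v i)) :=
  calc _ = piExpect F (fun v => piExpect (piMixture F σ) fun a =>
          lam * OPT v - mu * SW a v) := by
        simp only [piExpect_sub, piExpect_const_mul, piExpect_const (sum_piMixture hF hσ)]
    _ ≤ piExpect F (fun v => piExpect (piMixture F σ) fun a =>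
          ∑ i, ∑ b, D v i b * u i (Function.update a i b) (v i)) :=
        piExpect_mono hF0 fun v => piExpect_mono (piMixture_nonneg hF0 hσ0) (hD v)
    _ = ∑ i, piExpect F fun v => ∑ b, D v i b * interimUtility F σ i (u i) (v i) b := by
        simp only [piExpect_sum, piExpect_const_mul]
        rfl
    _ ≤ _ := sum_le_sum fun i _ =>
        hN.piExpect_deviation_le hF0 hF hσ i _ (fun v => hD0 v i) (fun v => hD1 v i)

end Auction

theorem bayesian_smooth_auction_poa_general
    (n : ℕ) (A V : Fin n → Type)
    [∀ i, Fintype (A i)]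
    [∀ i, Fintype (V i)]
    (F : ∀ i, V i → ℝ) (hF0 : ∀ i vi, 0 ≤ F i vi) (hF1 : ∀ i, ∑ vi, F i vi = 1)
    (u : ∀ i : Fin n, (∀ j, A j) → V i → ℝ)
    (p : ∀ _ : Fin n, (∀ j, A j) → ℝ) (hp : ∀ i a, 0 ≤ p i a)
    (lam mu : ℝ) (hmu : 0 ≤ mu)
    (SW : (∀ j, A j) → (∀ j, V j) → ℝ)
    (hSW : ∀ a v, SW a v = (∑ i, u i a (v i)) + ∑ i, p i a)
    (OPT : (∀ j, V j) → ℝ)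
    (hsmooth : ∀ v : ∀ j, V j, ∃ D : ∀ i, A i → ℝ,
      (∀ i ai, 0 ≤ D i ai) ∧ (∀ i, ∑ ai, D i ai = 1) ∧
      ∀ a : ∀ j, A j,
        ∑ i, ∑ ai, D i ai * u i (Function.update a i ai) (v i) ≥
          lam * OPT v - mu * SW a v)
    (σ : ∀ i, V i → A i → ℝ)
    (hσ0 : ∀ i vi ai, 0 ≤ σ i vi ai) (hσ1 : ∀ i vi, ∑ ai, σ i vi ai = 1)
    (hBNE : ∀ (i : Fin n) (vi : V i) (a'i : A i),
      ∑ v : ∀ j, V j, (∏ j, F j (v j)) *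
          ∑ a : ∀ j, A j, (∏ j, σ j (Function.update v i vi j) (a j)) * u i a vi ≥
        ∑ v : ∀ j, V j, (∏ j, F j (v j)) *
          ∑ a : ∀ j, A j, (∏ j, σ j (Function.update v i vi j) (a j)) *
            u i (Function.update a i a'i) vi) :
    ∑ v : ∀ j, V j, (∏ j, F j (v j)) *
        ∑ a : ∀ j, A j, (∏ j, σ j (v j) (a j)) * SW a v ≥
      (lam / (1 + mu)) * ∑ v : ∀ j, V j, (∏ j, F j (v j)) * OPT v := by
  choose D hD0 hD1 hD using hsmooth
  have hN : IsBayesNash F σ u := hBNE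
  have hbound := hN.smooth_deviation_bound hF0 hF1 hσ0 hσ1 lam mu OPT D hD0 hD1 hD
  have hdecoupled := hN.piExpect_piMixture_welfare_le hF0 hF1 hσ0 hσ1 hSW
  have hutility := sum_piExpect_utility_le_welfare hF0 hσ0 hp hSW
  change lam / (1 + mu) * piExpect F OPT ≤
    piExpect F fun v => piExpect (fun j => σ j (v j)) fun a => SW a v
  rw [div_mul_eq_mul_div, div_le_iff₀ (by positivity)]
  nlinarith [mul_le_mul_of_nonneg_left hdecoupled hmu]

/-- If a Bayesian auction is (λ,μ)-smooth (λ, μ ≥ 0) and valuation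
distributions are independent, then every Bayes-Nash equilibrium has expected welfare at
least λ/(1+μ) times the optimal expected welfare. -/
theorem bayesian_smooth_auction_poa
    (n : ℕ) (A V : Fin n → Type)
    [∀ i, Fintype (A i)] [∀ i, Nonempty (A i)]
    [∀ i, Fintype (V i)] [∀ i, Nonempty (V i)]
    (F : ∀ i, V i → ℝ) (hF0 : ∀ i vi, 0 ≤ F i vi) (hF1 : ∀ i, ∑ vi, F i vi = 1)
    (u : ∀ i : Fin n, (∀ j, A j) → V i → ℝ)
    (p : ∀ _ : Fin n, (∀ j, A j) → ℝ) (hp : ∀ i a, 0 ≤ p i a)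
    (lam mu : ℝ) (hlam : 0 ≤ lam) (hmu : 0 ≤ mu)
    (SW : (∀ j, A j) → (∀ j, V j) → ℝ)
    (hSW : ∀ a v, SW a v = (∑ i, u i a (v i)) + ∑ i, p i a)
    (OPT : (∀ j, V j) → ℝ)
    (hOPT : ∀ v, OPT v =
      Finset.univ.sup' Finset.univ_nonempty (fun a : ∀ j, A j => SW a v))
    (hsmooth : ∀ v : ∀ j, V j, ∃ D : ∀ i, A i → ℝ,
      (∀ i ai, 0 ≤ D i ai) ∧ (∀ i, ∑ ai, D i ai = 1) ∧
      ∀ a : ∀ j, A j,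
        ∑ i, ∑ ai, D i ai * u i (Function.update a i ai) (v i) ≥
          lam * OPT v - mu * SW a v)
    (σ : ∀ i, V i → A i → ℝ)
    (hσ0 : ∀ i vi ai, 0 ≤ σ i vi ai) (hσ1 : ∀ i vi, ∑ ai, σ i vi ai = 1)
    (hBNE : ∀ (i : Fin n) (vi : V i) (a'i : A i),
      ∑ v : ∀ j, V j, (∏ j, F j (v j)) *
          ∑ a : ∀ j, A j, (∏ j, σ j (Function.update v i vi j) (a j)) * u i a vi ≥
        ∑ v : ∀ j, V j, (∏ j, F j (v j)) *
          ∑ a : ∀ j, A j, (∏ j, σ j (Function.update v i vi j) (a j)) *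
            u i (Function.update a i a'i) vi) :
    ∑ v : ∀ j, V j, (∏ j, F j (v j)) *
        ∑ a : ∀ j, A j, (∏ j, σ j (v j) (a j)) * SW a v ≥
      (lam / (1 + mu)) * ∑ v : ∀ j, V j, (∏ j, F j (v j)) * OPT v :=
  bayesian_smooth_auction_poa_general n A V F hF0 hF1 u p hp lam mu hmu SW hSW OPT hsmooth σ hσ0 hσ1
    hBNE
end

section
/- Suppose a Bayesian auction is (λ,μ)-smooth in the sense of Syrgkanis–Tardos with λ ≥ 0 and μ ≥ 1, the players' valuation distributions are independent, and σ is a Bayes-Nash equilibrium in which every player's expected equilibrium utility is nonnegative (E_{v₋ᵢ∼F₋ᵢ} E_{a∼σ(v)}[uᵢ(a; vᵢ)] ≥ 0 for all i and vᵢ). Then E_{v∼F} E_{a∼σ(v)}[SW(a; v)] ≥ (λ/μ)·E_{v∼F}[OPT(v)]. -/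
open Finset

section Aux
variable {n : ℕ} {β : Fin n → Type} [∀ j, Fintype (β j)]

omit [∀ j, Fintype (β j)] in
lemma aux_prod_comp_update (c : ∀ j, β j → ℝ) (x : ∀ j, β j) (i : Fin n) (b : β i) :
    ∏ j, c j (Function.update x i b j)
      = c i b * ∏ j ∈ Finset.univ.erase i, c j (x j) := by
  rw [← Finset.mul_prod_erase Finset.univ (fun j => c j (Function.update x i b j))
    (Finset.mem_univ i), Function.update_self]
  congr 1
  exact Finset.prod_congr rfl fun j hj => by
    rw [Function.update_of_ne (Finset.ne_of_mem_erase hj)]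

omit [∀ j, Fintype (β j)] in
lemma aux_prod_split (c : ∀ j, β j → ℝ) (x : ∀ j, β j) (i : Fin n) :
    ∏ j, c j (x j) = c i (x i) * ∏ j ∈ Finset.univ.erase i, c j (x j) :=
  (Finset.mul_prod_erase Finset.univ (fun j => c j (x j)) (Finset.mem_univ i)).symm

lemma aux_sum_prod_pi (c : ∀ j, β j → ℝ) (h1 : ∀ j, ∑ b, c j b = 1) :
    ∑ x : ∀ j, β j, ∏ j, c j (x j) = 1 := by
  classical
  rw [← Fintype.piFinset_univ, ← Finset.prod_univ_sum]
  simp [h1]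

lemma aux_L1 (c : ∀ j, β j → ℝ) (h1 : ∀ j, ∑ b, c j b = 1) (i : Fin n)
    (g : (∀ j, β j) → β i → ℝ) :
    ∑ x : β i, c i x * ∑ v : ∀ j, β j, (∏ j, c j (v j)) * g (Function.update v i x) x
      = ∑ v : ∀ j, β j, (∏ j, c j (v j)) * g v (v i) := by
  classical
  have h2 : (∑ x : β i, c i x *
        ∑ v : ∀ j, β j, (∏ j, c j (v j)) * g (Function.update v i x) x)
      = ∑ q : β i × (∀ j, β j),
          c i q.1 * ((∏ j, c j (q.2 j)) * g (Function.update q.2 i q.1) q.1) := by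
    rw [Fintype.sum_prod_type]
    simp [Finset.mul_sum]
  have h3 : (∑ v : ∀ j, β j, (∏ j, c j (v j)) * g v (v i))
      = ∑ q : β i × (∀ j, β j),
          c i q.1 * ((∏ j, c j (q.2 j)) * g q.2 (q.2 i)) := by
    rw [Fintype.sum_prod_type]
    have : ∀ x : β i, (∑ v : ∀ j, β j, c i x * ((∏ j, c j (v j)) * g v (v i)))
        = c i x * ∑ v : ∀ j, β j, (∏ j, c j (v j)) * g v (v i) :=
      fun x => (Finset.mul_sum _ _ _).symm
    rw [Finset.sum_congr rfl fun x _ => this x, ← Finset.sum_mul, h1 i, one_mul]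
  rw [h2, h3]
  apply Fintype.sum_bijective
    (fun q : β i × (∀ j, β j) => ((q.2 i), Function.update q.2 i q.1))
    (Function.Involutive.bijective (fun q => by
      simp [Function.update_idem, Function.update_self, Function.update_eq_self]))
  rintro ⟨x, v⟩
  simp only [Function.update_self]
  rw [aux_prod_comp_update c v i x, aux_prod_split c v i]
  ring

lemma aux_K (c c' : ∀ j, β j → ℝ) (i : Fin n)
    (hc : ∑ b, c i b = 1) (hc' : ∑ b, c' i b = 1)
    (hagree : ∀ j, j ≠ i → c j = c' j)
    (ψ : (∀ j, β j) → ℝ) (hψ : ∀ x b, ψ (Function.update x i b) = ψ x) :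
    ∑ x : ∀ j, β j, (∏ j, c j (x j)) * ψ x
      = ∑ x : ∀ j, β j, (∏ j, c' j (x j)) * ψ x := by
  classical
  have h2 : (∑ x : ∀ j, β j, (∏ j, c j (x j)) * ψ x)
      = ∑ q : β i × (∀ j, β j), c' i q.1 * ((∏ j, c j (q.2 j)) * ψ q.2) := by
    rw [Fintype.sum_prod_type, ← Finset.sum_comm]
    refine (Finset.sum_congr rfl fun x _ => ?_).symm
    simp only
    rw [← Finset.sum_mul, hc', one_mul]
  have h3 : (∑ x : ∀ j, β j, (∏ j, c' j (x j)) * ψ x)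
      = ∑ q : β i × (∀ j, β j), c i q.1 * ((∏ j, c' j (q.2 j)) * ψ q.2) := by
    rw [Fintype.sum_prod_type, ← Finset.sum_comm]
    refine (Finset.sum_congr rfl fun x _ => ?_).symm
    simp only
    rw [← Finset.sum_mul, hc, one_mul]
  rw [h2, h3]
  apply Fintype.sum_bijective
    (fun q : β i × (∀ j, β j) => ((q.2 i), Function.update q.2 i q.1))
    (Function.Involutive.bijective (fun q => by
      simp [Function.update_idem, Function.update_self, Function.update_eq_self]))
  rintro ⟨b, x⟩
  simp only [Function.update_self]
  rw [hψ, aux_prod_comp_update c' x i b, aux_prod_split c x i]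
  have herase : (∏ j ∈ Finset.univ.erase i, c j (x j))
      = ∏ j ∈ Finset.univ.erase i, c' j (x j) :=
    Finset.prod_congr rfl fun j hj => by rw [hagree j (Finset.ne_of_mem_erase hj)]
  rw [herase]
  ring

end Aux

lemma aux_swap2 {ι κ : Type*} [Fintype ι] [Fintype κ]
    (f : ι → ℝ) (g : κ → ℝ) (h : ι → κ → ℝ) :
    ∑ i, f i * ∑ k, g k * h i k = ∑ k, g k * ∑ i, f i * h i k := by
  simp only [Finset.mul_sum]
  rw [Finset.sum_comm]
  exact Finset.sum_congr rfl fun k _ => Finset.sum_congr rfl fun i _ => by ring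

lemma aux_swap1 {ι κ : Type*} [Fintype ι] [Fintype κ]
    (g : κ → ℝ) (h : ι → κ → ℝ) :
    ∑ i, ∑ k, g k * h i k = ∑ k, g k * ∑ i, h i k := by
  rw [Finset.sum_comm]
  exact Finset.sum_congr rfl fun k _ => (Finset.mul_sum _ _ _).symm

/-- If a Bayesian auction is (λ,μ)-smooth in the sense of Syrgkanis–Tardos
(λ ≥ 0, μ ≥ 1), valuation distributions are independent, and σ is a Bayes-Nash
equilibrium with nonnegative expected equilibrium utilities, then the expected welfare of
σ is at least λ/μ times the optimal expected welfare. -/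
theorem bayesian_ST_smooth_auction_poa
    (n : ℕ) (A V : Fin n → Type)
    [∀ i, Fintype (A i)] [∀ i, Nonempty (A i)]
    [∀ i, Fintype (V i)] [∀ i, Nonempty (V i)]
    (F : ∀ i, V i → ℝ) (hF0 : ∀ i vi, 0 ≤ F i vi) (hF1 : ∀ i, ∑ vi, F i vi = 1)
    (u : ∀ i : Fin n, (∀ j, A j) → V i → ℝ)
    (p : ∀ _ : Fin n, (∀ j, A j) → ℝ) (hp : ∀ i a, 0 ≤ p i a)
    (lam mu : ℝ) (hlam : 0 ≤ lam) (hmu : 1 ≤ mu)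
    (R : (∀ j, A j) → ℝ) (hR : ∀ a, R a = ∑ i, p i a)
    (SW : (∀ j, A j) → (∀ j, V j) → ℝ)
    (hSW : ∀ a v, SW a v = (∑ i, u i a (v i)) + R a)
    (OPT : (∀ j, V j) → ℝ)
    (hOPT : ∀ v, OPT v =
      Finset.univ.sup' Finset.univ_nonempty (fun a : ∀ j, A j => SW a v))
    (hsmooth : ∀ v : ∀ j, V j, ∃ D : ∀ i, A i → ℝ,
      (∀ i ai, 0 ≤ D i ai) ∧ (∀ i, ∑ ai, D i ai = 1) ∧
      ∀ a : ∀ j, A j,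
        ∑ i, ∑ ai, D i ai * u i (Function.update a i ai) (v i) ≥
          lam * OPT v - mu * R a)
    (σ : ∀ i, V i → A i → ℝ)
    (hσ0 : ∀ i vi ai, 0 ≤ σ i vi ai) (hσ1 : ∀ i vi, ∑ ai, σ i vi ai = 1)
    (hBNE : ∀ (i : Fin n) (vi : V i) (a'i : A i),
      ∑ v : ∀ j, V j, (∏ j, F j (v j)) *
          ∑ a : ∀ j, A j, (∏ j, σ j (Function.update v i vi j) (a j)) * u i a vi ≥
        ∑ v : ∀ j, V j, (∏ j, F j (v j)) *
          ∑ a : ∀ j, A j, (∏ j, σ j (Function.update v i vi j) (a j)) *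
            u i (Function.update a i a'i) vi)
    (hutil0 : ∀ (i : Fin n) (vi : V i),
      0 ≤ ∑ v : ∀ j, V j, (∏ j, F j (v j)) *
          ∑ a : ∀ j, A j, (∏ j, σ j (Function.update v i vi j) (a j)) * u i a vi) :
    ∑ v : ∀ j, V j, (∏ j, F j (v j)) *
        ∑ a : ∀ j, A j, (∏ j, σ j (v j) (a j)) * SW a v ≥
      (lam / mu) * ∑ v : ∀ j, V j, (∏ j, F j (v j)) * OPT v := by
  classical
  choose D hD0 hD1 hDs using hsmooth
  have hPnn : ∀ v : ∀ j, V j, 0 ≤ ∏ j, F j (v j) :=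
    fun v => Finset.prod_nonneg fun j _ => hF0 j (v j)
  have hQnn : ∀ (v : ∀ j, V j) (a : ∀ j, A j), 0 ≤ ∏ j, σ j (v j) (a j) :=
    fun v a => Finset.prod_nonneg fun j _ => hσ0 j (v j) (a j)
  have hP1 : ∑ v : ∀ j, V j, ∏ j, F j (v j) = 1 := aux_sum_prod_pi F hF1
  have hQ1 : ∀ v : ∀ j, V j, ∑ a : ∀ j, A j, ∏ j, σ j (v j) (a j) = 1 :=
    fun v => aux_sum_prod_pi (fun j => σ j (v j)) (fun j => hσ1 j (v j))
  -- Step W : welfare decomposition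
  have stepW : (∑ v : ∀ j, V j, (∏ j, F j (v j)) *
        ∑ a : ∀ j, A j, (∏ j, σ j (v j) (a j)) * SW a v)
      = (∑ i, ∑ x : V i, F i x * ∑ v : ∀ j, V j, (∏ j, F j (v j)) *
            ∑ a : ∀ j, A j, (∏ j, σ j (Function.update v i x j) (a j)) * u i a x)
        + ∑ v : ∀ j, V j, (∏ j, F j (v j)) *
            ∑ a : ∀ j, A j, (∏ j, σ j (v j) (a j)) * R a := by
    have hUi : ∀ i : Fin n, (∑ x : V i, F i x * ∑ v : ∀ j, V j, (∏ j, F j (v j)) *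
          ∑ a : ∀ j, A j, (∏ j, σ j (Function.update v i x j) (a j)) * u i a x)
        = ∑ v : ∀ j, V j, (∏ j, F j (v j)) *
            ∑ a : ∀ j, A j, (∏ j, σ j (v j) (a j)) * u i a (v i) :=
      fun i => aux_L1 F hF1 i
        (fun v x => ∑ a : ∀ j, A j, (∏ j, σ j (v j) (a j)) * u i a x)
    rw [Finset.sum_congr rfl fun i (_ : i ∈ Finset.univ) => hUi i]
    simp only [hSW, mul_add, Finset.sum_add_distrib]
    congr 1
    rw [aux_swap1 (fun v : ∀ j, V j => ∏ j, F j (v j))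
      (fun i v => ∑ a : ∀ j, A j, (∏ j, σ j (v j) (a j)) * u i a (v i))]
    refine Finset.sum_congr rfl fun v _ => ?_
    congr 1
    rw [aux_swap1 (fun a : ∀ j, A j => ∏ j, σ j (v j) (a j))
      (fun i a => u i a (v i))]
  -- Step D : deviation bound from BNE
  have stepD : ∀ (i : Fin n) (x : V i),
      (∑ v : ∀ j, V j, (∏ j, F j (v j)) *
        ∑ a : ∀ j, A j, (∏ j, σ j (Function.update v i x j) (a j)) * u i a x)
      ≥ ∑ w : ∀ j, V j, (∏ j, F j (w j)) *
          ∑ v : ∀ j, V j, (∏ j, F j (v j)) *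
            ∑ a : ∀ j, A j, (∏ j, σ j (v j) (a j)) *
              ∑ ai : A i, D (Function.update w i x) i ai *
                u i (Function.update a i ai) x := by
    intro i x
    have hdnn : ∀ ai : A i, 0 ≤ ∑ w : ∀ j, V j,
        (∏ j, F j (w j)) * D (Function.update w i x) i ai :=
      fun ai => Finset.sum_nonneg fun w _ =>
        mul_nonneg (hPnn w) (hD0 _ i ai)
    have hd1 : (∑ ai : A i, ∑ w : ∀ j, V j,
        (∏ j, F j (w j)) * D (Function.update w i x) i ai) = 1 := by
      rw [Finset.sum_comm]
      have h : ∀ w : ∀ j, V j, (∑ ai : A i,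
          (∏ j, F j (w j)) * D (Function.update w i x) i ai) = ∏ j, F j (w j) :=
        fun w => by rw [← Finset.mul_sum, hD1, mul_one]
      rw [Finset.sum_congr rfl fun w _ => h w, hP1]
    have hmix : (∑ v : ∀ j, V j, (∏ j, F j (v j)) *
          ∑ a : ∀ j, A j, (∏ j, σ j (Function.update v i x j) (a j)) * u i a x)
        ≥ ∑ ai : A i, (∑ w : ∀ j, V j,
            (∏ j, F j (w j)) * D (Function.update w i x) i ai) *
          ∑ v : ∀ j, V j, (∏ j, F j (v j)) *
            ∑ a : ∀ j, A j, (∏ j, σ j (Function.update v i x j) (a j)) *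
              u i (Function.update a i ai) x := by
      have heq : (∑ v : ∀ j, V j, (∏ j, F j (v j)) *
            ∑ a : ∀ j, A j, (∏ j, σ j (Function.update v i x j) (a j)) * u i a x)
          = ∑ ai : A i, (∑ w : ∀ j, V j,
              (∏ j, F j (w j)) * D (Function.update w i x) i ai) *
            ∑ v : ∀ j, V j, (∏ j, F j (v j)) *
              ∑ a : ∀ j, A j, (∏ j, σ j (Function.update v i x j) (a j)) * u i a x := by
        rw [← Finset.sum_mul, hd1, one_mul]
      rw [heq]
      exact Finset.sum_le_sum fun ai _ =>
        mul_le_mul_of_nonneg_left (hBNE i x ai) (hdnn ai)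
    refine le_trans ?_ hmix
    -- rearrangement of the mixed deviation sum
    have hre : (∑ ai : A i, (∑ w : ∀ j, V j,
          (∏ j, F j (w j)) * D (Function.update w i x) i ai) *
        ∑ v : ∀ j, V j, (∏ j, F j (v j)) *
          ∑ a : ∀ j, A j, (∏ j, σ j (Function.update v i x j) (a j)) *
            u i (Function.update a i ai) x)
        = ∑ w : ∀ j, V j, (∏ j, F j (w j)) *
            ∑ v : ∀ j, V j, (∏ j, F j (v j)) *
              ∑ a : ∀ j, A j, (∏ j, σ j (Function.update v i x j) (a j)) *
                ∑ ai : A i, D (Function.update w i x) i ai *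
                  u i (Function.update a i ai) x := by
      -- first: Σ_ai (Σ_w Pw*D) * X ai = Σ_w Pw * Σ_ai D * X ai
      rw [Finset.sum_congr rfl fun (ai : A i) (_ : ai ∈ Finset.univ) =>
        Finset.sum_mul (Finset.univ) (fun w : ∀ j, V j =>
          (∏ j, F j (w j)) * D (Function.update w i x) i ai) _]
      rw [Finset.sum_comm]
      refine Finset.sum_congr rfl fun w _ => ?_
      have : ∀ ai : A i, ((∏ j, F j (w j)) * D (Function.update w i x) i ai) *
            (∑ v : ∀ j, V j, (∏ j, F j (v j)) *
              ∑ a : ∀ j, A j, (∏ j, σ j (Function.update v i x j) (a j)) *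
                u i (Function.update a i ai) x)
          = (∏ j, F j (w j)) * (D (Function.update w i x) i ai *
            ∑ v : ∀ j, V j, (∏ j, F j (v j)) *
              ∑ a : ∀ j, A j, (∏ j, σ j (Function.update v i x j) (a j)) *
                u i (Function.update a i ai) x) := fun ai => by ring
      rw [Finset.sum_congr rfl fun ai _ => this ai, ← Finset.mul_sum]
      congr 1
      -- Σ_ai D ai * Σ_v Pv * Y v ai = Σ_v Pv * Σ_ai D ai * Y v ai
      rw [aux_swap2 (fun ai : A i => D (Function.update w i x) i ai)
        (fun v : ∀ j, V j => ∏ j, F j (v j)) _]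
      refine Finset.sum_congr rfl fun v _ => ?_
      congr 1
      -- Σ_ai D ai * Σ_a Q' a * u = Σ_a Q' a * Σ_ai D ai * u
      rw [aux_swap2 (fun ai : A i => D (Function.update w i x) i ai)
        (fun a : ∀ j, A j => ∏ j, σ j (Function.update v i x j) (a j)) _]
    rw [hre]
    -- now replace σ(update v i x) by σ(v) using aux_K
    refine le_of_eq (Finset.sum_congr rfl fun w _ => ?_)
    congr 1
    refine Finset.sum_congr rfl fun v _ => ?_
    congr 1
    exact (aux_K (fun j => σ j (v j)) (fun j => σ j (Function.update v i x j)) i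
      (hσ1 i (v i)) (by simpa using hσ1 i x)
      (fun j hj => by simp [Function.update_of_ne hj])
      (fun a => ∑ ai : A i, D (Function.update w i x) i ai *
        u i (Function.update a i ai) x)
      (fun a b => by
        refine Finset.sum_congr rfl fun ai _ => ?_
        rw [Function.update_idem]))
  -- Step E : integrate out own valuation
  have stepE : ∀ i : Fin n,
      (∑ x : V i, F i x * ∑ v : ∀ j, V j, (∏ j, F j (v j)) *
        ∑ a : ∀ j, A j, (∏ j, σ j (Function.update v i x j) (a j)) * u i a x)
      ≥ ∑ w : ∀ j, V j, (∏ j, F j (w j)) *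
          ∑ v : ∀ j, V j, (∏ j, F j (v j)) *
            ∑ a : ∀ j, A j, (∏ j, σ j (v j) (a j)) *
              ∑ ai : A i, D w i ai * u i (Function.update a i ai) (w i) := by
    intro i
    have h1 : (∑ x : V i, F i x * ∑ v : ∀ j, V j, (∏ j, F j (v j)) *
          ∑ a : ∀ j, A j, (∏ j, σ j (Function.update v i x j) (a j)) * u i a x)
        ≥ ∑ x : V i, F i x * ∑ w : ∀ j, V j, (∏ j, F j (w j)) *
            ∑ v : ∀ j, V j, (∏ j, F j (v j)) *
              ∑ a : ∀ j, A j, (∏ j, σ j (v j) (a j)) *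
                ∑ ai : A i, D (Function.update w i x) i ai *
                  u i (Function.update a i ai) x :=
      Finset.sum_le_sum fun x _ =>
        mul_le_mul_of_nonneg_left (stepD i x) (hF0 i x)
    refine le_trans (le_of_eq ?_) h1
    exact (aux_L1 F hF1 i (fun w x =>
      ∑ v : ∀ j, V j, (∏ j, F j (v j)) *
        ∑ a : ∀ j, A j, (∏ j, σ j (v j) (a j)) *
          ∑ ai : A i, D w i ai * u i (Function.update a i ai) x)).symm
  -- sum Step E over i and swap sums
  have stepF : (∑ i, ∑ x : V i, F i x * ∑ v : ∀ j, V j, (∏ j, F j (v j)) *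
        ∑ a : ∀ j, A j, (∏ j, σ j (Function.update v i x j) (a j)) * u i a x)
      ≥ ∑ w : ∀ j, V j, (∏ j, F j (w j)) *
          ∑ v : ∀ j, V j, (∏ j, F j (v j)) *
            ∑ a : ∀ j, A j, (∏ j, σ j (v j) (a j)) *
              ∑ i, ∑ ai : A i, D w i ai * u i (Function.update a i ai) (w i) := by
    have h1 : (∑ i, ∑ x : V i, F i x * ∑ v : ∀ j, V j, (∏ j, F j (v j)) *
          ∑ a : ∀ j, A j, (∏ j, σ j (Function.update v i x j) (a j)) * u i a x)
        ≥ ∑ i, ∑ w : ∀ j, V j, (∏ j, F j (w j)) *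
            ∑ v : ∀ j, V j, (∏ j, F j (v j)) *
              ∑ a : ∀ j, A j, (∏ j, σ j (v j) (a j)) *
                ∑ ai : A i, D w i ai * u i (Function.update a i ai) (w i) :=
      Finset.sum_le_sum fun i _ => stepE i
    refine le_trans (le_of_eq ?_) h1
    rw [aux_swap1 (fun w : ∀ j, V j => ∏ j, F j (w j)) _]
    refine Finset.sum_congr rfl fun w _ => ?_
    congr 1
    rw [aux_swap1 (fun v : ∀ j, V j => ∏ j, F j (v j)) _]
    refine Finset.sum_congr rfl fun v _ => ?_
    congr 1
    rw [aux_swap1 (fun a : ∀ j, A j => ∏ j, σ j (v j) (a j)) _]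
  -- Step S : smoothness
  have stepS : (∑ w : ∀ j, V j, (∏ j, F j (w j)) *
        ∑ v : ∀ j, V j, (∏ j, F j (v j)) *
          ∑ a : ∀ j, A j, (∏ j, σ j (v j) (a j)) *
            ∑ i, ∑ ai : A i, D w i ai * u i (Function.update a i ai) (w i))
      ≥ lam * (∑ v : ∀ j, V j, (∏ j, F j (v j)) * OPT v)
        - mu * ∑ v : ∀ j, V j, (∏ j, F j (v j)) *
            ∑ a : ∀ j, A j, (∏ j, σ j (v j) (a j)) * R a := by
    have hinner : ∀ (w v : ∀ j, V j),
        (∑ a : ∀ j, A j, (∏ j, σ j (v j) (a j)) *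
          ∑ i, ∑ ai : A i, D w i ai * u i (Function.update a i ai) (w i))
        ≥ lam * OPT w - mu * ∑ a : ∀ j, A j, (∏ j, σ j (v j) (a j)) * R a := by
      intro w v
      have h1 : (∑ a : ∀ j, A j, (∏ j, σ j (v j) (a j)) *
            (lam * OPT w - mu * R a))
          ≤ ∑ a : ∀ j, A j, (∏ j, σ j (v j) (a j)) *
            ∑ i, ∑ ai : A i, D w i ai * u i (Function.update a i ai) (w i) :=
        Finset.sum_le_sum fun a _ =>
          mul_le_mul_of_nonneg_left (hDs w a) (hQnn v a)
      refine le_trans (le_of_eq ?_) h1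
      have expand : ∀ a : ∀ j, A j, (∏ j, σ j (v j) (a j)) * (lam * OPT w - mu * R a)
          = (∏ j, σ j (v j) (a j)) * (lam * OPT w)
            - mu * ((∏ j, σ j (v j) (a j)) * R a) := fun a => by ring
      rw [Finset.sum_congr rfl fun a _ => expand a, Finset.sum_sub_distrib,
        ← Finset.sum_mul, hQ1 v, one_mul, ← Finset.mul_sum]
    have h2 : (∑ w : ∀ j, V j, (∏ j, F j (w j)) *
          ∑ v : ∀ j, V j, (∏ j, F j (v j)) *
            (lam * OPT w - mu * ∑ a : ∀ j, A j, (∏ j, σ j (v j) (a j)) * R a))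
        ≤ ∑ w : ∀ j, V j, (∏ j, F j (w j)) *
            ∑ v : ∀ j, V j, (∏ j, F j (v j)) *
              ∑ a : ∀ j, A j, (∏ j, σ j (v j) (a j)) *
                ∑ i, ∑ ai : A i, D w i ai * u i (Function.update a i ai) (w i) :=
      Finset.sum_le_sum fun w _ => mul_le_mul_of_nonneg_left
        (Finset.sum_le_sum fun v _ =>
          mul_le_mul_of_nonneg_left (hinner w v) (hPnn v)) (hPnn w)
    refine le_trans (le_of_eq ?_) h2
    have expand2 : ∀ w : ∀ j, V j, (∑ v : ∀ j, V j, (∏ j, F j (v j)) *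
          (lam * OPT w - mu * ∑ a : ∀ j, A j, (∏ j, σ j (v j) (a j)) * R a))
        = lam * OPT w - mu * ∑ v : ∀ j, V j, (∏ j, F j (v j)) *
            ∑ a : ∀ j, A j, (∏ j, σ j (v j) (a j)) * R a := by
      intro w
      have e : ∀ v : ∀ j, V j, (∏ j, F j (v j)) *
            (lam * OPT w - mu * ∑ a : ∀ j, A j, (∏ j, σ j (v j) (a j)) * R a)
          = (∏ j, F j (v j)) * (lam * OPT w)
            - mu * ((∏ j, F j (v j)) *
              ∑ a : ∀ j, A j, (∏ j, σ j (v j) (a j)) * R a) := fun v => by ring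
      rw [Finset.sum_congr rfl fun v _ => e v, Finset.sum_sub_distrib,
        ← Finset.sum_mul, hP1, one_mul, ← Finset.mul_sum]
    have expand3 : ∀ w : ∀ j, V j, (∏ j, F j (w j)) *
          (lam * OPT w - mu * ∑ v : ∀ j, V j, (∏ j, F j (v j)) *
            ∑ a : ∀ j, A j, (∏ j, σ j (v j) (a j)) * R a)
        = lam * ((∏ j, F j (w j)) * OPT w)
          - (∏ j, F j (w j)) * (mu * ∑ v : ∀ j, V j, (∏ j, F j (v j)) *
            ∑ a : ∀ j, A j, (∏ j, σ j (v j) (a j)) * R a) := fun w => by ring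
    have e4 : (∑ w : ∀ j, V j, (∏ j, F j (w j)) *
          (lam * OPT w - mu * ∑ v : ∀ j, V j, (∏ j, F j (v j)) *
            ∑ a : ∀ j, A j, (∏ j, σ j (v j) (a j)) * R a))
        = lam * (∑ v : ∀ j, V j, (∏ j, F j (v j)) * OPT v)
          - mu * ∑ v : ∀ j, V j, (∏ j, F j (v j)) *
              ∑ a : ∀ j, A j, (∏ j, σ j (v j) (a j)) * R a := by
      rw [Finset.sum_congr rfl fun w (_ : w ∈ Finset.univ) => expand3 w,
        Finset.sum_sub_distrib, ← Finset.mul_sum, ← Finset.sum_mul, hP1, one_mul]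
    rw [← e4]
    exact Finset.sum_congr rfl fun w _ => by rw [expand2 w]
  -- nonnegativity of total equilibrium utility
  have hSU0 : (0:ℝ) ≤ ∑ i, ∑ x : V i, F i x * ∑ v : ∀ j, V j, (∏ j, F j (v j)) *
      ∑ a : ∀ j, A j, (∏ j, σ j (Function.update v i x j) (a j)) * u i a x :=
    Finset.sum_nonneg fun i _ => Finset.sum_nonneg fun x _ =>
      mul_nonneg (hF0 i x) (hutil0 i x)
  -- expected revenue is nonnegative
  have hERnn : (0:ℝ) ≤ ∑ v : ∀ j, V j, (∏ j, F j (v j)) *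
      ∑ a : ∀ j, A j, (∏ j, σ j (v j) (a j)) * R a :=
    Finset.sum_nonneg fun v _ => mul_nonneg (hPnn v)
      (Finset.sum_nonneg fun a _ => mul_nonneg (hQnn v a)
        (by rw [hR]; exact Finset.sum_nonneg fun i _ => hp i a))
  -- combine everything
  have key : (∑ v : ∀ j, V j, (∏ j, F j (v j)) *
        ∑ a : ∀ j, A j, (∏ j, σ j (v j) (a j)) * SW a v)
      ≥ lam * (∑ v : ∀ j, V j, (∏ j, F j (v j)) * OPT v)
        - (mu - 1) * ∑ v : ∀ j, V j, (∏ j, F j (v j)) *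
            ∑ a : ∀ j, A j, (∏ j, σ j (v j) (a j)) * R a := by
    rw [stepW]
    have := le_trans stepS stepF
    linarith
  have hERle : (∑ v : ∀ j, V j, (∏ j, F j (v j)) *
        ∑ a : ∀ j, A j, (∏ j, σ j (v j) (a j)) * R a)
      ≤ ∑ v : ∀ j, V j, (∏ j, F j (v j)) *
        ∑ a : ∀ j, A j, (∏ j, σ j (v j) (a j)) * SW a v := by
    rw [stepW]
    linarith
  have hmupos : (0:ℝ) < mu := lt_of_lt_of_le one_pos hmu
  rw [ge_iff_le, div_mul_eq_mul_div, div_le_iff₀ hmupos]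
  have h1 : (mu - 1) * (∑ v : ∀ j, V j, (∏ j, F j (v j)) *
        ∑ a : ∀ j, A j, (∏ j, σ j (v j) (a j)) * R a)
      ≤ (mu - 1) * ∑ v : ∀ j, V j, (∏ j, F j (v j)) *
        ∑ a : ∀ j, A j, (∏ j, σ j (v j) (a j)) * SW a v :=
    mul_le_mul_of_nonneg_left hERle (by linarith)
  nlinarith [key, h1]
end

section
/- Consider a simultaneous second-price auction with independent valuation distributions, and suppose the following pricing property holds (it is valid when all valuations are sub-additive): for every player i, every valuation vᵢ, every set of items S ⊆ [m], and every probability distribution B₋ᵢ over the other players' bid profiles, there exists a (possibly randomized) no-overbidding action b*ᵢ of player i such that E[uᵢ((b*ᵢ, b₋ᵢ); vᵢ)] + E_{b₋ᵢ∼B₋ᵢ}[Σ_{j∈S} max_{k≠i} b_{kj}] ≥ (1/2)·vᵢ(S). Then every Bayes-Nash equilibrium has expected welfare at least 1/4 of the expected optimal welfare: E_v E_{b}[SW(b; v)] ≥ (1/4)·E_v[OPT(v)]. -/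
open Finset

/-- The highest bid on item `j` among players other than `i` (bids are nonnegative). -/
def maxOtherBid {n m : ℕ} (bids : Fin n → Fin m → ℝ) (i : Fin n) (j : Fin m) : ℝ :=
  (Finset.univ.erase i).fold max 0 (fun k => bids k j)

/-- The set of items won by player `i` under the allocation rule `win`. -/
def wonItems {n m : ℕ} {A : Fin n → Type} (win : (∀ k, A k) → Fin m → Fin n)
    (b : ∀ k, A k) (i : Fin n) : Finset (Fin m) :=
  Finset.univ.filter (fun j => win b j = i)

/-- The optimal welfare: the maximum over allocations of disjoint item sets. -/
def optWelfare (n m : ℕ) (val : Fin n → Finset (Fin m) → ℝ) : ℝ :=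
  Finset.univ.sup' Finset.univ_nonempty
    (fun g : Fin m → Option (Fin n) =>
      ∑ i, val i (Finset.univ.filter (fun j => g j = some i)))


section Helpers

variable {n : ℕ} {π : Fin n → Type} [∀ j, Fintype (π j)]

def updEquiv (i : Fin n) : (π i × ∀ j, π j) ≃ (π i × ∀ j, π j) where
  toFun p := (p.2 i, Function.update p.2 i p.1)
  invFun p := (p.2 i, Function.update p.2 i p.1)
  left_inv p := by
    simp [Function.update_self, Function.update_idem, Function.update_eq_self]
  right_inv p := by
    simp [Function.update_self, Function.update_idem, Function.update_eq_self]

lemma sum_update_pair (i : Fin n) (f : π i → (∀ j, π j) → ℝ) :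
    ∑ x : π i, ∑ v : ∀ j, π j, f x v
      = ∑ x : π i, ∑ v : ∀ j, π j, f (v i) (Function.update v i x) := by
  have e := Fintype.sum_equiv (updEquiv (π := π) i)
    (fun p => f p.1 p.2) (fun p => f (p.2 i) (Function.update p.2 i p.1)) ?_
  · calc ∑ x : π i, ∑ v : ∀ j, π j, f x v
        = ∑ p : π i × ∀ j, π j, f p.1 p.2 :=
          (Fintype.sum_prod_type (f := fun p : π i × ∀ j, π j => f p.1 p.2)).symm
      _ = ∑ p : π i × ∀ j, π j, f (p.2 i) (Function.update p.2 i p.1) := e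
      _ = _ := Fintype.sum_prod_type
              (f := fun p : π i × ∀ j, π j => f (p.2 i) (Function.update p.2 i p.1))
  · intro p
    simp [updEquiv, Function.update_self, Function.update_idem, Function.update_eq_self]

omit [∀ j, Fintype (π j)] in
lemma prod_update_eq (F : ∀ j, π j → ℝ) (i : Fin n) (x : π i) (v : ∀ j, π j) :
    F i (v i) * ∏ j, F j (Function.update v i x j) = F i x * ∏ j, F j (v j) := by
  rw [← Finset.mul_prod_erase univ (fun j => F j (Function.update v i x j)) (mem_univ i),
      ← Finset.mul_prod_erase univ (fun j => F j (v j)) (mem_univ i)]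
  have h : ∀ j ∈ univ.erase i, F j (Function.update v i x j) = F j (v j) := by
    intro j hj
    rw [Function.update_of_ne (Finset.ne_of_mem_erase hj)]
  rw [Finset.prod_congr rfl h, Function.update_self]
  ring

lemma sum_pi_prod_eq_one (h : ∀ k, π k → ℝ) (h1 : ∀ k, ∑ a, h k a = 1) :
    ∑ b : ∀ k, π k, ∏ k, h k (b k) = 1 := by
  rw [← Fintype.prod_sum]
  simp [h1]

lemma sum_update_marg₂ (F : ∀ j, π j → ℝ) (i : Fin n) (Φ : π i → (∀ j, π j) → ℝ) :
    ∑ x : π i, ∑ v : ∀ j, π j, (F i x * ∏ j, F j (v j)) * Φ x (Function.update v i x)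
      = ∑ x : π i, ∑ v : ∀ j, π j, (F i x * ∏ j, F j (v j)) * Φ (v i) v := by
  rw [sum_update_pair i (fun x v => (F i x * ∏ j, F j (v j)) * Φ x (Function.update v i x))]
  refine Finset.sum_congr rfl fun x _ => Finset.sum_congr rfl fun v _ => ?_
  rw [prod_update_eq, Function.update_idem, Function.update_eq_self]

lemma sum_update_marg (F : ∀ j, π j → ℝ) (hF1 : ∀ j, ∑ x, F j x = 1) (i : Fin n)
    (H : (∀ j, π j) → ℝ) :
    ∑ x : π i, ∑ v : ∀ j, π j, (F i x * ∏ j, F j (v j)) * H (Function.update v i x)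
      = ∑ v : ∀ j, π j, (∏ j, F j (v j)) * H v := by
  rw [sum_update_marg₂ F i (fun _ u => H u), Finset.sum_comm]
  refine Finset.sum_congr rfl fun v _ => ?_
  rw [← Finset.sum_mul, ← Finset.sum_mul, hF1 i, one_mul]

lemma sum_pi_ignore (i : Fin n) (h : ∀ k, π k → ℝ) (τ : π i → ℝ) (hτ : ∑ a, τ a = 1)
    (hsum : ∑ a, h i a = 1) (P : (∀ k, π k) → ℝ)
    (hP : ∀ b a, P (Function.update b i a) = P b) :
    ∑ b, (∏ k, h k (b k)) * P b
      = ∑ b, τ (b i) * ((∏ k ∈ univ.erase i, h k (b k)) * P b) := by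
  have step1 : ∑ b : ∀ k, π k, (∏ k, h k (b k)) * P b
      = ∑ a : π i, ∑ b : ∀ k, π k, τ a * ((∏ k, h k (b k)) * P b) := by
    rw [Finset.sum_comm]
    refine Finset.sum_congr rfl fun b _ => ?_
    rw [← Finset.sum_mul, hτ, one_mul]
  rw [step1, sum_update_pair i (fun a b => τ a * ((∏ k, h k (b k)) * P b))]
  have step2 : ∀ (a : π i) (b : ∀ k, π k),
      τ (b i) * ((∏ k, h k (Function.update b i a k)) * P (Function.update b i a))
        = h i a * (τ (b i) * ((∏ k ∈ univ.erase i, h k (b k)) * P b)) := by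
    intro a b
    rw [hP, ← Finset.mul_prod_erase univ (fun k => h k (Function.update b i a k)) (mem_univ i),
        Finset.prod_congr rfl
          (fun k hk => by rw [Function.update_of_ne (Finset.ne_of_mem_erase hk)]),
        Function.update_self]
    ring
  calc ∑ a : π i, ∑ b : ∀ k, π k,
        τ (b i) * ((∏ k, h k (Function.update b i a k)) * P (Function.update b i a))
      = ∑ a : π i, h i a * ∑ b : ∀ k, π k,
          τ (b i) * ((∏ k ∈ univ.erase i, h k (b k)) * P b) := by
        refine Finset.sum_congr rfl fun a _ => ?_
        rw [Finset.mul_sum]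
        exact Finset.sum_congr rfl fun b _ => step2 a b
    _ = _ := by rw [← Finset.sum_mul, hsum, one_mul]

lemma sum_pi_update_invariant (i : Fin n) (h₁ h₂ : ∀ k, π k → ℝ)
    (hagree : ∀ k, k ≠ i → h₁ k = h₂ k)
    (h₁s : ∑ a, h₁ i a = 1) (h₂s : ∑ a, h₂ i a = 1)
    (P : (∀ k, π k) → ℝ) (hP : ∀ b a, P (Function.update b i a) = P b) :
    ∑ b, (∏ k, h₁ k (b k)) * P b = ∑ b, (∏ k, h₂ k (b k)) * P b := by
  rw [sum_pi_ignore i h₁ (h₁ i) h₁s h₁s P hP, sum_pi_ignore i h₂ (h₁ i) h₁s h₂s P hP]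
  refine Finset.sum_congr rfl fun b _ => ?_
  have : ∏ k ∈ univ.erase i, h₁ k (b k) = ∏ k ∈ univ.erase i, h₂ k (b k) :=
    Finset.prod_congr rfl fun k hk => by rw [hagree k (Finset.ne_of_mem_erase hk)]
  rw [this]

end Helpers

lemma maxOtherBid_nonneg {n m : ℕ} (bids : Fin n → Fin m → ℝ) (i : Fin n) (j : Fin m) :
    0 ≤ maxOtherBid bids i j :=
  (Finset.le_fold_max (c := 0)).mpr (Or.inl le_rfl)

lemma maxOtherBid_le {n m : ℕ} {bids : Fin n → Fin m → ℝ} {i : Fin n} {j : Fin m} {c : ℝ}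
    (hc : 0 ≤ c) (h : ∀ k, bids k j ≤ c) : maxOtherBid bids i j ≤ c :=
  (Finset.fold_max_le (c := c)).mpr ⟨hc, fun k _ => h k⟩

lemma maxOtherBid_congr {n m : ℕ} {bids bids' : Fin n → Fin m → ℝ} (i : Fin n) (j : Fin m)
    (h : ∀ k, k ≠ i → bids k j = bids' k j) : maxOtherBid bids i j = maxOtherBid bids' i j :=
  Finset.fold_congr fun k hk => h k (Finset.ne_of_mem_erase hk)

lemma price_sum_le {n m : ℕ} {A : Fin n → Type}
    (valv : Fin n → Finset (Fin m) → ℝ)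
    (bid : ∀ i, A i → Fin m → ℝ) (hbid0 : ∀ i ai j, 0 ≤ bid i ai j)
    (win : (∀ k, A k) → Fin m → Fin n)
    (hwin : ∀ (b : ∀ k, A k) (j : Fin m) (k : Fin n),
      bid k (b k) j ≤ bid (win b j) (b (win b j)) j)
    (b : ∀ k, A k)
    (hno : ∀ k (T : Finset (Fin m)), ∑ j ∈ T, bid k (b k) j ≤ valv k T)
    (Tset : Fin n → Finset (Fin m)) (g : Fin m → Option (Fin n))
    (hTset : ∀ i, Tset i = univ.filter fun j => g j = some i) :
    ∑ i, ∑ j ∈ Tset i, maxOtherBid (fun k => bid k (b k)) i j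
      ≤ ∑ i, valv i (wonItems win b i) := by
  have hf0 : ∀ j, 0 ≤ bid (win b j) (b (win b j)) j := fun j => hbid0 _ _ _
  have hmob : ∀ i j, maxOtherBid (fun k => bid k (b k)) i j ≤ bid (win b j) (b (win b j)) j :=
    fun i j => maxOtherBid_le (hf0 j) (fun k => hwin b j k)
  have step1 : ∑ i, ∑ j ∈ Tset i, maxOtherBid (fun k => bid k (b k)) i j
      ≤ ∑ i, ∑ j ∈ Tset i, bid (win b j) (b (win b j)) j :=
    Finset.sum_le_sum fun i _ => Finset.sum_le_sum fun j _ => hmob i j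
  have step2 : ∑ i, ∑ j ∈ Tset i, bid (win b j) (b (win b j)) j
      ≤ ∑ j, bid (win b j) (b (win b j)) j := by
    calc ∑ i, ∑ j ∈ Tset i, bid (win b j) (b (win b j)) j
        = ∑ i, ∑ j, if g j = some i then bid (win b j) (b (win b j)) j else 0 := by
          refine Finset.sum_congr rfl fun i _ => ?_
          rw [hTset i, Finset.sum_filter]
      _ = ∑ j, ∑ i, if g j = some i then bid (win b j) (b (win b j)) j else 0 :=
          Finset.sum_comm
      _ ≤ ∑ j, bid (win b j) (b (win b j)) j := by
          refine Finset.sum_le_sum fun j _ => ?_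
          cases hgj : g j with
          | none => simp [hgj]; exact hf0 j
          | some i0 => simp
  have step3 : ∑ j, bid (win b j) (b (win b j)) j
      = ∑ i, ∑ j ∈ wonItems win b i, bid i (b i) j := by
    symm
    calc ∑ i, ∑ j ∈ wonItems win b i, bid i (b i) j
        = ∑ i, ∑ j, if win b j = i then bid i (b i) j else 0 := by
          refine Finset.sum_congr rfl fun i _ => ?_
          rw [wonItems, Finset.sum_filter]
      _ = ∑ j, ∑ i, if win b j = i then bid i (b i) j else 0 := Finset.sum_comm
      _ = ∑ j, bid (win b j) (b (win b j)) j := by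
          refine Finset.sum_congr rfl fun j _ => ?_
          rw [Finset.sum_ite_eq univ (win b j) (fun i => bid i (b i) j)]
          simp
  have step4 : ∑ i, ∑ j ∈ wonItems win b i, bid i (b i) j
      ≤ ∑ i, valv i (wonItems win b i) :=
    Finset.sum_le_sum fun i _ => hno i _
  linarith

lemma sum_dist_mul {α β : Type} [Fintype α] [Fintype β]
    (μ : α → ℝ) (ρ : α → β → ℝ) (g : β → ℝ) :
    ∑ b : β, (∑ v : α, μ v * ρ v b) * g b = ∑ v : α, μ v * ∑ b : β, ρ v b * g b := by
  simp_rw [Finset.sum_mul]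
  rw [Finset.sum_comm]
  simp_rw [mul_assoc, ← Finset.mul_sum]

lemma sum_mul_sum_swap {β γ : Type} [Fintype β] [Fintype γ]
    (ρ : β → ℝ) (Bs : γ → ℝ) (u : β → γ → ℝ) :
    ∑ b : β, ρ b * ∑ a : γ, Bs a * u b a = ∑ a : γ, Bs a * ∑ b : β, ρ b * u b a := by
  simp_rw [Finset.mul_sum]
  rw [Finset.sum_comm]
  exact Finset.sum_congr rfl fun a _ => Finset.sum_congr rfl fun b _ => by ring

/-- in a simultaneous second-price auction with independent valuations
satisfying the pricing property (valid for sub-additive valuations), every Bayes-Nash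
equilibrium has expected welfare at least 1/4 of the expected optimal welfare. -/
theorem s2a_poa_quarter
    (n m : ℕ)
    (V : Fin n → Type) [∀ i, Fintype (V i)] [∀ i, Nonempty (V i)]
    (A : Fin n → Type) [∀ i, Fintype (A i)] [∀ i, Nonempty (A i)]
    (F : ∀ i, V i → ℝ) (hF0 : ∀ i vi, 0 ≤ F i vi) (hF1 : ∀ i, ∑ vi, F i vi = 1)
    (val : ∀ i, V i → Finset (Fin m) → ℝ)
    (hval0 : ∀ i vi, val i vi ∅ = 0)
    (hvalnn : ∀ i vi S, 0 ≤ val i vi S)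
    (hvalmono : ∀ i vi, ∀ S T : Finset (Fin m), S ⊆ T → val i vi S ≤ val i vi T)
    (bid : ∀ i, A i → Fin m → ℝ) (hbid0 : ∀ i ai j, 0 ≤ bid i ai j)
    -- allocation: each item goes to a highest bidder (fixed deterministic tie-breaking)
    (win : (∀ k, A k) → Fin m → Fin n)
    (hwin : ∀ (b : ∀ k, A k) (j : Fin m) (k : Fin n),
      bid k (b k) j ≤ bid (win b j) (b (win b j)) j)
    -- second-price utility
    (util : ∀ i : Fin n, (∀ k, A k) → V i → ℝ)
    (hutil : ∀ i b vi, util i b vi =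
      val i vi (wonItems win b i) - ∑ j ∈ wonItems win b i, maxOtherBid (fun k => bid k (b k)) i j)
    -- the pricing property (a consequence of sub-additivity)
    (hprice : ∀ (i : Fin n) (vi : V i) (S : Finset (Fin m)) (D : (∀ k, A k) → ℝ),
      (∀ b, 0 ≤ D b) → (∑ b, D b = 1) →
      ∃ Bs : A i → ℝ, (∀ ai, 0 ≤ Bs ai) ∧ (∑ ai, Bs ai = 1) ∧
        (∀ ai, Bs ai ≠ 0 → ∀ T : Finset (Fin m), ∑ j ∈ T, bid i ai j ≤ val i vi T) ∧
        (∑ b, D b * ∑ ai, Bs ai * util i (Function.update b i ai) vi)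
          + (∑ b, D b * ∑ j ∈ S, maxOtherBid (fun k => bid k (b k)) i j)
          ≥ (1 / 2) * val i vi S)
    -- Bayes-Nash equilibrium supported on no-overbidding actions
    (σ : ∀ i, V i → A i → ℝ)
    (hσ0 : ∀ i vi ai, 0 ≤ σ i vi ai) (hσ1 : ∀ i vi, ∑ ai, σ i vi ai = 1)
    (hσno : ∀ i vi ai, σ i vi ai ≠ 0 →
      ∀ T : Finset (Fin m), ∑ j ∈ T, bid i ai j ≤ val i vi T)
    (hBNE : ∀ (i : Fin n) (vi : V i) (a'i : A i),
      (∀ T : Finset (Fin m), ∑ j ∈ T, bid i a'i j ≤ val i vi T) →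
      ∑ v : ∀ j, V j, (∏ j, F j (v j)) *
          ∑ b : ∀ k, A k, (∏ k, σ k (Function.update v i vi k) (b k)) * util i b vi ≥
        ∑ v : ∀ j, V j, (∏ j, F j (v j)) *
          ∑ b : ∀ k, A k, (∏ k, σ k (Function.update v i vi k) (b k)) *
            util i (Function.update b i a'i) vi) :
    ∑ v : ∀ j, V j, (∏ j, F j (v j)) *
        ∑ b : ∀ k, A k, (∏ k, σ k (v k) (b k)) *
          (∑ i, val i (v i) (wonItems win b i)) ≥
      (1 / 4) * ∑ v : ∀ j, V j, (∏ j, F j (v j)) *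
        optWelfare n m (fun i => val i (v i)) := by
  classical
  have hFprod : ∀ v : ∀ j, V j, 0 ≤ ∏ j, F j (v j) :=
    fun v => Finset.prod_nonneg fun j _ => hF0 j (v j)
  have hσprod : ∀ (v : ∀ j, V j) (b : ∀ k, A k), 0 ≤ ∏ k, σ k (v k) (b k) :=
    fun v b => Finset.prod_nonneg fun k _ => hσ0 k (v k) (b k)
  have hFsum : ∑ v : ∀ j, V j, ∏ j, F j (v j) = 1 := sum_pi_prod_eq_one _ hF1
  -- choose an optimal allocation for each valuation profile
  have hoptex : ∀ v : ∀ j, V j, ∃ g : Fin m → Option (Fin n),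
      optWelfare n m (fun i => val i (v i))
        = ∑ i, val i (v i) (univ.filter fun j => g j = some i) := by
    intro v
    obtain ⟨g, -, hg⟩ := Finset.exists_mem_eq_sup' Finset.univ_nonempty
      (fun g : Fin m → Option (Fin n) =>
        ∑ i, val i (v i) (univ.filter fun j => g j = some i))
    exact ⟨g, hg⟩
  choose gopt hgopt using hoptex
  obtain ⟨T, hT⟩ : ∃ T : (∀ j, V j) → Fin n → Finset (Fin m),
      ∀ v i, T v i = univ.filter fun j => gopt v j = some i := ⟨_, fun _ _ => rfl⟩
  obtain ⟨P, hPdef⟩ : ∃ P : Fin n → Finset (Fin m) → (∀ k, A k) → ℝ,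
      ∀ i S b, P i S b = ∑ j ∈ S, maxOtherBid (fun k => bid k (b k)) i j :=
    ⟨_, fun _ _ _ => rfl⟩
  have hPign : ∀ (i : Fin n) (S : Finset (Fin m)) (b : ∀ k, A k) (a : A i),
      P i S (Function.update b i a) = P i S b := by
    intro i S b a
    rw [hPdef, hPdef]
    refine Finset.sum_congr rfl fun j _ => ?_
    refine maxOtherBid_congr i j fun k hk => ?_
    rw [Function.update_of_ne hk]
  obtain ⟨G, hG⟩ : ∃ G : Fin n → (∀ j, V j) → ℝ,
      ∀ i u, G i u = (1 / 2) * val i (u i) (T u i) := ⟨_, fun _ _ => rfl⟩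
  obtain ⟨Q, hQ⟩ : ∃ Q : Fin n → (∀ j, V j) → ℝ,
      ∀ i u, Q i u = ∑ v : ∀ j, V j, (∏ j, F j (v j)) *
        ∑ b : ∀ k, A k, (∏ k, σ k (v k) (b k)) * P i (T u i) b := ⟨_, fun _ _ => rfl⟩
  obtain ⟨EU, hEU⟩ : ∃ EU : ∀ i, V i → ℝ, ∀ i vi, EU i vi =
      ∑ v : ∀ j, V j, (∏ j, F j (v j)) *
        ∑ b : ∀ k, A k, (∏ k, σ k (Function.update v i vi k) (b k)) * util i b vi :=
    ⟨_, fun _ _ => rfl⟩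
  set W : ℝ := ∑ v : ∀ j, V j, (∏ j, F j (v j)) *
      ∑ b : ∀ k, A k, (∏ k, σ k (v k) (b k)) *
        (∑ i, val i (v i) (wonItems win b i)) with hWdef
  -- the key per-player inequality coming from the pricing property and the BNE property
  have key : ∀ (i : Fin n) (vi : V i),
      ∑ w : ∀ j, V j, (∏ j, F j (w j)) *
          (G i (Function.update w i vi) - Q i (Function.update w i vi)) ≤ EU i vi := by
    intro i vi
    have hEUc : EU i vi = ∑ w : ∀ j, V j, (∏ j, F j (w j)) * EU i vi := by
      rw [← Finset.sum_mul, hFsum, one_mul]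
    rw [hEUc]
    refine Finset.sum_le_sum fun w _ => mul_le_mul_of_nonneg_left ?_ (hFprod w)
    -- fixed w : apply the pricing property with S = T (update w i vi) i
    obtain ⟨Bs, hBs0, hBs1, hBsno, hBineq⟩ := hprice i vi (T (Function.update w i vi) i)
      (fun b => ∑ v : ∀ j, V j, (∏ j, F j (v j)) *
        ∏ k, σ k (Function.update v i vi k) (b k))
      (fun b => Finset.sum_nonneg fun v _ => mul_nonneg (hFprod v)
        (Finset.prod_nonneg fun k _ => hσ0 _ _ _))
      (by
        rw [Finset.sum_comm]
        calc ∑ v : ∀ j, V j, ∑ b : ∀ k, A k,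
              (∏ j, F j (v j)) * ∏ k, σ k (Function.update v i vi k) (b k)
            = ∑ v : ∀ j, V j, (∏ j, F j (v j)) *
                ∑ b : ∀ k, A k, ∏ k, σ k (Function.update v i vi k) (b k) := by
              refine Finset.sum_congr rfl fun v _ => ?_
              rw [Finset.mul_sum]
          _ = 1 := by
              rw [← hFsum]
              refine Finset.sum_congr rfl fun v _ => ?_
              rw [sum_pi_prod_eq_one _ (fun k => hσ1 k _), mul_one])
    simp only [← hPdef] at hBineq
    have hQeq : ∑ b : ∀ k, A k,
        (∑ v : ∀ j, V j, (∏ j, F j (v j)) *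
          ∏ k, σ k (Function.update v i vi k) (b k)) *
          P i (T (Function.update w i vi) i) b
        = Q i (Function.update w i vi) := by
      rw [sum_dist_mul, hQ]
      refine Finset.sum_congr rfl fun v _ => ?_
      congr 1
      exact sum_pi_update_invariant i (fun k => σ k (Function.update v i vi k))
        (fun k => σ k (v k)) (fun k hk => by simp [Function.update_of_ne hk])
        (by simp only [Function.update_self]; exact hσ1 i vi)
        (hσ1 i (v i)) (P i (T (Function.update w i vi) i))
        (fun b a => hPign i _ b a)
    have hdev : ∑ b : ∀ k, A k,
        (∑ v : ∀ j, V j, (∏ j, F j (v j)) *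
          ∏ k, σ k (Function.update v i vi k) (b k)) *
          ∑ ai, Bs ai * util i (Function.update b i ai) vi ≤ EU i vi := by
      rw [sum_dist_mul]
      calc ∑ v : ∀ j, V j, (∏ j, F j (v j)) *
            ∑ b : ∀ k, A k, (∏ k, σ k (Function.update v i vi k) (b k)) *
              ∑ ai, Bs ai * util i (Function.update b i ai) vi
          = ∑ v : ∀ j, V j, (∏ j, F j (v j)) *
              ∑ ai, Bs ai * ∑ b : ∀ k, A k,
                (∏ k, σ k (Function.update v i vi k) (b k)) *
                  util i (Function.update b i ai) vi := by
            refine Finset.sum_congr rfl fun v _ => ?_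
            rw [sum_mul_sum_swap]
        _ = ∑ ai, Bs ai * ∑ v : ∀ j, V j, (∏ j, F j (v j)) *
              ∑ b : ∀ k, A k, (∏ k, σ k (Function.update v i vi k) (b k)) *
                util i (Function.update b i ai) vi := sum_mul_sum_swap _ _ _
        _ ≤ ∑ ai, Bs ai * EU i vi := by
            refine Finset.sum_le_sum fun ai _ => ?_
            rcases eq_or_ne (Bs ai) 0 with h0 | h0
            · rw [h0, zero_mul, zero_mul]
            · refine mul_le_mul_of_nonneg_left ?_ (hBs0 ai)
              have hb := hBNE i vi ai (hBsno ai h0)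
              rw [hEU]
              exact hb
        _ = EU i vi := by rw [← Finset.sum_mul, hBs1, one_mul]
    have hGval : G i (Function.update w i vi) =
        (1 / 2) * val i vi (T (Function.update w i vi) i) := by
      rw [hG, Function.update_self]
    rw [hGval]
    linarith [hBineq, hdev, hQeq]
  -- the per-player expected utility, marginalized
  obtain ⟨Hf, hHf⟩ : ∃ Hf : Fin n → (∀ j, V j) → ℝ, ∀ i u, Hf i u =
      ∑ b : ∀ k, A k, (∏ k, σ k (u k) (b k)) * util i b (u i) := ⟨_, fun _ _ => rfl⟩
  have hL1 : ∀ i : Fin n, ∑ vi : V i, F i vi * EU i vi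
      = ∑ v : ∀ j, V j, (∏ j, F j (v j)) * Hf i v := by
    intro i
    have hpt : ∀ vi : V i, F i vi * EU i vi = ∑ v : ∀ j, V j,
        (F i vi * ∏ j, F j (v j)) * Hf i (Function.update v i vi) := by
      intro vi
      rw [hEU, Finset.mul_sum]
      refine Finset.sum_congr rfl fun v _ => ?_
      rw [hHf]
      simp only [Function.update_self]
      ring
    rw [Finset.sum_congr rfl fun vi _ => hpt vi]
    exact sum_update_marg F hF1 i (Hf i)
  have hLW : ∑ i, ∑ vi : V i, F i vi * EU i vi ≤ W := by
    calc ∑ i, ∑ vi : V i, F i vi * EU i vi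
        = ∑ i, ∑ v : ∀ j, V j, (∏ j, F j (v j)) * Hf i v :=
          Finset.sum_congr rfl fun i _ => hL1 i
      _ = ∑ v : ∀ j, V j, (∏ j, F j (v j)) * ∑ i, Hf i v := by
          rw [Finset.sum_comm]
          exact Finset.sum_congr rfl fun v _ => (Finset.mul_sum _ _ _).symm
      _ ≤ W := by
          rw [hWdef]
          refine Finset.sum_le_sum fun v _ => mul_le_mul_of_nonneg_left ?_ (hFprod v)
          calc ∑ i, Hf i v
              = ∑ b : ∀ k, A k, (∏ k, σ k (v k) (b k)) * ∑ i, util i b (v i) := by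
                simp only [hHf]
                rw [Finset.sum_comm]
                exact Finset.sum_congr rfl fun b _ => (Finset.mul_sum _ _ _).symm
            _ ≤ ∑ b : ∀ k, A k, (∏ k, σ k (v k) (b k)) *
                  ∑ i, val i (v i) (wonItems win b i) := by
                refine Finset.sum_le_sum fun b _ =>
                  mul_le_mul_of_nonneg_left ?_ (hσprod v b)
                refine Finset.sum_le_sum fun i _ => ?_
                rw [hutil]
                have hpay : 0 ≤ ∑ j ∈ wonItems win b i,
                    maxOtherBid (fun k => bid k (b k)) i j :=
                  Finset.sum_nonneg fun j _ => maxOtherBid_nonneg _ i j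
                linarith
  have hGsum : ∑ i, ∑ w : ∀ j, V j, (∏ j, F j (w j)) * G i w
      = (1 / 2) * ∑ v : ∀ j, V j, (∏ j, F j (v j)) *
          optWelfare n m (fun i => val i (v i)) := by
    rw [Finset.sum_comm, Finset.mul_sum]
    refine Finset.sum_congr rfl fun w _ => ?_
    rw [← Finset.mul_sum]
    have hGw : ∑ i, G i w = (1 / 2) * optWelfare n m (fun i => val i (w i)) := by
      rw [hgopt w, Finset.mul_sum]
      exact Finset.sum_congr rfl fun i _ => by rw [hG, hT]
    rw [hGw]
    ring
  have hQsum : ∑ i, ∑ w : ∀ j, V j, (∏ j, F j (w j)) * Q i w ≤ W := by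
    have hQW : ∀ w : ∀ j, V j, ∑ i, Q i w ≤ W := by
      intro w
      calc ∑ i, Q i w
          = ∑ v : ∀ j, V j, (∏ j, F j (v j)) *
              ∑ b : ∀ k, A k, (∏ k, σ k (v k) (b k)) * ∑ i, P i (T w i) b := by
            simp only [hQ]
            rw [Finset.sum_comm]
            refine Finset.sum_congr rfl fun v _ => ?_
            rw [← Finset.mul_sum]
            congr 1
            rw [Finset.sum_comm]
            exact Finset.sum_congr rfl fun b _ => (Finset.mul_sum _ _ _).symm
        _ ≤ W := by
            rw [hWdef]
            refine Finset.sum_le_sum fun v _ =>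
              mul_le_mul_of_nonneg_left ?_ (hFprod v)
            refine Finset.sum_le_sum fun b _ => ?_
            rcases eq_or_ne (∏ k, σ k (v k) (b k)) 0 with h0 | h0
            · rw [h0, zero_mul, zero_mul]
            · refine mul_le_mul_of_nonneg_left ?_ (hσprod v b)
              have hno : ∀ k (Tk : Finset (Fin m)),
                  ∑ j ∈ Tk, bid k (b k) j ≤ val k (v k) Tk := by
                intro k Tk
                refine hσno k (v k) (b k)
                  (fun hz => h0 (Finset.prod_eq_zero (mem_univ k) hz)) Tk
              have hps := price_sum_le (fun k => val k (v k)) bid hbid0 win hwin b hno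
                (T w) (gopt w) (fun i => hT w i)
              simpa only [hPdef] using hps
    calc ∑ i, ∑ w : ∀ j, V j, (∏ j, F j (w j)) * Q i w
        = ∑ w : ∀ j, V j, (∏ j, F j (w j)) * ∑ i, Q i w := by
          rw [Finset.sum_comm]
          exact Finset.sum_congr rfl fun w _ => (Finset.mul_sum _ _ _).symm
      _ ≤ ∑ w : ∀ j, V j, (∏ j, F j (w j)) * W :=
          Finset.sum_le_sum fun w _ => mul_le_mul_of_nonneg_left (hQW w) (hFprod w)
      _ = W := by rw [← Finset.sum_mul, hFsum, one_mul]
  have hkey2 : ∀ i : Fin n,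
      (∑ w : ∀ j, V j, (∏ j, F j (w j)) * G i w)
        - (∑ w : ∀ j, V j, (∏ j, F j (w j)) * Q i w)
      ≤ ∑ vi : V i, F i vi * EU i vi := by
    intro i
    have h1 : ∀ vi : V i, ∑ w : ∀ j, V j, (F i vi * ∏ j, F j (w j)) *
        (G i (Function.update w i vi) - Q i (Function.update w i vi))
          ≤ F i vi * EU i vi := by
      intro vi
      have hm := mul_le_mul_of_nonneg_left (key i vi) (hF0 i vi)
      calc ∑ w : ∀ j, V j, (F i vi * ∏ j, F j (w j)) *
            (G i (Function.update w i vi) - Q i (Function.update w i vi))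
          = F i vi * ∑ w : ∀ j, V j, (∏ j, F j (w j)) *
              (G i (Function.update w i vi) - Q i (Function.update w i vi)) := by
            rw [Finset.mul_sum]
            exact Finset.sum_congr rfl fun w _ => by ring
        _ ≤ F i vi * EU i vi := hm
    have h2 : ∑ vi : V i, ∑ w : ∀ j, V j, (F i vi * ∏ j, F j (w j)) *
        (G i (Function.update w i vi) - Q i (Function.update w i vi))
        = ∑ v : ∀ j, V j, (∏ j, F j (v j)) * (G i v - Q i v) :=
      sum_update_marg F hF1 i (fun u => G i u - Q i u)
    calc (∑ w : ∀ j, V j, (∏ j, F j (w j)) * G i w)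
          - (∑ w : ∀ j, V j, (∏ j, F j (w j)) * Q i w)
        = ∑ v : ∀ j, V j, (∏ j, F j (v j)) * (G i v - Q i v) := by
          rw [← Finset.sum_sub_distrib]
          exact Finset.sum_congr rfl fun v _ => by ring
      _ = ∑ vi : V i, ∑ w : ∀ j, V j, (F i vi * ∏ j, F j (w j)) *
            (G i (Function.update w i vi) - Q i (Function.update w i vi)) := h2.symm
      _ ≤ ∑ vi : V i, F i vi * EU i vi := Finset.sum_le_sum fun vi _ => h1 vi
  have hA : (∑ i, ∑ w : ∀ j, V j, (∏ j, F j (w j)) * G i w)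
      - (∑ i, ∑ w : ∀ j, V j, (∏ j, F j (w j)) * Q i w)
      ≤ ∑ i, ∑ vi : V i, F i vi * EU i vi := by
    rw [← Finset.sum_sub_distrib]
    exact Finset.sum_le_sum fun i _ => hkey2 i
  rw [ge_iff_le]
  linarith [hA, hGsum, hQsum, hLW]
end
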